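/- arXiv:2401.08479 — 4 statements merged into one kernel-verified Lean document; each statement's English description precedes it below -/
import Mathlib

section
/- Let f : S^1 → ℝ be continuous and non-constant, p ≥ 1, and suppose that the real tree T(f) is a doubling metric space. Then there exists a constant C > 0 such that for all ε > 0 there exists r_0 > 0 with C^{-1}·V_r^p(f) − ε ≤ N_r(T(f))·r^p ≤ C·V_r^p(f) + ε for all 0 < r < r_0, where N_r(T(f)) denotes the maximal cardinality of an r-separated subset of T(f). -/
open Set Filter Metric Topology
open scoped ENNReal NNReal

noncomputable section

/-- A partition of `[0,1]` with `n+1` points `0 ≤ x₀ < x₁ < ⋯ < xₙ ≤ 1`. -/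
def IsPartition (n : ℕ) (x : Fin (n + 1) → ℝ) : Prop :=
  StrictMono x ∧ ∀ i, x i ∈ Set.Icc (0 : ℝ) 1

/-- The variational sum `∑ |f(xᵢ) - f(xᵢ₊₁)|^p` of `f` along a partition. -/
def varSum (f : ℝ → ℝ) (p : ℝ) (n : ℕ) (x : Fin (n + 1) → ℝ) : ℝ :=
  ∑ i : Fin n, |f (x i.castSucc) - f (x i.succ)| ^ p

/-- The `p`-variation `V^p(f)` of `f` over `[0,1]`. -/
def pVar (f : ℝ → ℝ) (p : ℝ) : ℝ≥0∞ :=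
  ⨆ (n : ℕ) (x : Fin (n + 1) → ℝ) (_ : IsPartition n x), ENNReal.ofReal (varSum f p n x)

/-- The variation index `I(f) = sup {p ≥ 1 | V^p(f) = ∞}` (with `sup ∅ = 1`). -/
def varIndex (f : ℝ → ℝ) : ℝ≥0∞ :=
  1 ⊔ ⨆ (p : ℝ) (_ : 1 ≤ p) (_ : pVar f p = ⊤), ENNReal.ofReal p

/-- The `(p,r)`-variation `V_r^p(f)`: the supremum of variational sums over partitions
all of whose increments satisfy `|f(xᵢ) - f(xᵢ₊₁)| = r`. -/
def prVar (f : ℝ → ℝ) (p r : ℝ) : ℝ≥0∞ :=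
  ⨆ (n : ℕ) (x : Fin (n + 1) → ℝ) (_ : IsPartition n x)
    (_ : ∀ i : Fin n, |f (x i.castSucc) - f (x i.succ)| = r),
    ENNReal.ofReal (varSum f p n x)

/-- The upper variation content `V̄^p(f) = limsup_{r→0⁺} V_r^p(f)`. -/
def uVarContent (f : ℝ → ℝ) (p : ℝ) : ℝ≥0∞ :=
  limsup (fun r => prVar f p r) (𝓝[>] (0 : ℝ))

/-- The lower variation content `V̲^p(f) = liminf_{r→0⁺} V_r^p(f)`. -/
def lVarContent (f : ℝ → ℝ) (p : ℝ) : ℝ≥0∞ :=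
  liminf (fun r => prVar f p r) (𝓝[>] (0 : ℝ))

/-- The upper variation index `Ī(f) = sup {p ≥ 1 | V̄^p(f) = ∞}` (with `sup ∅ = 1`). -/
def upperVarIndex (f : ℝ → ℝ) : ℝ≥0∞ :=
  1 ⊔ ⨆ (p : ℝ) (_ : 1 ≤ p) (_ : uVarContent f p = ⊤), ENNReal.ofReal p

/-- The lower variation index `I̲(f) = sup {p ≥ 1 | V̲^p(f) = ∞}` (with `sup ∅ = 1`). -/
def lowerVarIndex (f : ℝ → ℝ) : ℝ≥0∞ :=
  1 ⊔ ⨆ (p : ℝ) (_ : 1 ≤ p) (_ : lVarContent f p = ⊤), ENNReal.ofReal p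

/-- The tree pseudometric `d_f(x,y) = f x + f y - 2 min_{[x∧y, x∨y]} f`. -/
def treeDist (f : ℝ → ℝ) (x y : ℝ) : ℝ :=
  f x + f y - 2 * sInf (f '' Set.uIcc x y)

/-- The maximal cardinality of an `r`-separated subset of `A` with respect to the
(pseudo)distance `d`. -/
def Nsep {X : Type*} (d : X → X → ℝ) (A : Set X) (r : ℝ) : ℕ :=
  sSup {n | ∃ s : Finset X, (s : Set X) ⊆ A ∧ s.card = n ∧
    ∀ x ∈ s, ∀ y ∈ s, x ≠ y → r < d x y}

/-- Upper box dimension associated with a counting function `N`. -/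
def ubdOf (N : ℝ → ℕ) : ℝ≥0∞ :=
  limsup (fun r : ℝ => ENNReal.ofReal (Real.log (N r : ℝ) / (-Real.log r))) (𝓝[>] (0 : ℝ))

/-- Lower box dimension associated with a counting function `N`. -/
def lbdOf (N : ℝ → ℕ) : ℝ≥0∞ :=
  liminf (fun r : ℝ => ENNReal.ofReal (Real.log (N r : ℝ) / (-Real.log r))) (𝓝[>] (0 : ℝ))

/-- Upper box dimension of the real tree `T(g)` of an excursion `g`, computed through
`r`-separated subsets of `([0,1], d_g)` (these correspond exactly to `r`-separated subsets
of the metric quotient `T(g)`). -/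
def ubdTree (g : ℝ → ℝ) : ℝ≥0∞ := ubdOf (fun r => Nsep (treeDist g) (Set.Icc 0 1) r)

/-- Lower box dimension of the real tree `T(g)` of an excursion `g`. -/
def lbdTree (g : ℝ → ℝ) : ℝ≥0∞ := lbdOf (fun r => Nsep (treeDist g) (Set.Icc 0 1) r)

/-- The modified upper box dimension of the real tree `T(g)`:
the infimum over countable covers of `sup_i ubd`. -/
def umbdTree (g : ℝ → ℝ) : ℝ≥0∞ :=
  ⨅ (U : ℕ → Set ℝ) (_ : Set.Icc (0 : ℝ) 1 ⊆ ⋃ i, U i),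
    ⨆ i, ubdOf (fun r => Nsep (treeDist g) (U i ∩ Set.Icc 0 1) r)

/-- The graph `Γ(g) = {(x, g x) | x ∈ [0,1]} ⊆ ℝ²`. -/
def graphSet (g : ℝ → ℝ) : Set (ℝ × ℝ) := {q | ∃ x ∈ Set.Icc (0 : ℝ) 1, q = (x, g x)}

/-- Upper box dimension of the graph of `g` over `[0,1]`. -/
def ubdGraph (g : ℝ → ℝ) : ℝ≥0∞ :=
  ubdOf (fun r => Nsep (fun u v : ℝ × ℝ => dist u v) (graphSet g) r)

/-- `τ : ℝ → ℝ` is a lift of a homeomorphism of the circle `S¹ = ℝ/ℤ`. -/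
def IsCircleHomeoLift (τ : ℝ → ℝ) : Prop :=
  Continuous τ ∧ Function.Bijective τ ∧
    ((∀ x, τ (x + 1) = τ x + 1) ∨ (∀ x, τ (x + 1) = τ x - 1))

end

/-!
Put `g = f (· + a) - f a`, so that `T(f)` is the tree of `g` on `[0, 1]`. A chain of points along
which `f` moves by exactly `r` becomes, after cutting it at `a` and rotating, a chain for `g`. The
tops of its steps can share a point of an `r/4`-net at most two at a time, since the bottom of a
middle step lies between the outer two tops and so pushes them apart in `d_g`; hence
`V_r^p(f) ≲ N_{r/4} r^p`. Conversely, two points at `d_g`-distance more than `4r` enclose an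
oscillation of `g` larger than `2r`, so by the intermediate value theorem a maximal
`4r`-separated set yields a chain with about half as many `r`-steps: `N_{4r} r^p ≲ V_r^p(f) + r^p`.
Doubling makes `N_{r/4}`, `N_r` and `N_{4r}` comparable, and the error `r^p` is eventually
below `ε`.
-/

section TreeDist

variable {g : ℝ → ℝ}

lemma treeDist_comm (g : ℝ → ℝ) (x y : ℝ) : treeDist g x y = treeDist g y x := by
  rw [treeDist, treeDist, uIcc_comm, add_comm (g x)]

lemma treeDist_self (g : ℝ → ℝ) (x : ℝ) : treeDist g x x = 0 := by
  rw [treeDist, uIcc_self, image_singleton, csInf_singleton]; ring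

lemma add_sub_two_mul_le_treeDist (hg : Continuous g) {x y z : ℝ} (hz : z ∈ uIcc x y) :
    g x + g y - 2 * g z ≤ treeDist g x y := by
  have : sInf (g '' uIcc x y) ≤ g z :=
    csInf_le (isCompact_uIcc.image hg).bddBelow (mem_image_of_mem g hz)
  rw [treeDist]; linarith

lemma exists_treeDist_eq (hg : Continuous g) (x y : ℝ) :
    ∃ w ∈ uIcc x y, treeDist g x y = g x + g y - 2 * g w := by
  obtain ⟨w, hw, hgw⟩ := (isCompact_uIcc.image hg).sInf_mem (nonempty_uIcc.image g)
  exact ⟨w, hw, by rw [treeDist, hgw]⟩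

lemma abs_sub_le_treeDist (hg : Continuous g) (x y : ℝ) : |g x - g y| ≤ treeDist g x y := by
  have hx := add_sub_two_mul_le_treeDist hg (left_mem_uIcc (a := x) (b := y))
  have hy := add_sub_two_mul_le_treeDist hg (right_mem_uIcc (a := x) (b := y))
  rw [abs_sub_le_iff]; constructor <;> linarith

lemma treeDist_triangle (hg : Continuous g) (x y z : ℝ) :
    treeDist g x z ≤ treeDist g x y + treeDist g y z := by
  obtain ⟨w, hw, hxz⟩ := exists_treeDist_eq hg x z
  rcases uIcc_subset_uIcc_union_uIcc (b := y) hw with hw | hw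
  · have := add_sub_two_mul_le_treeDist hg hw
    have := add_sub_two_mul_le_treeDist hg (left_mem_uIcc (a := y) (b := z))
    linarith
  · have := add_sub_two_mul_le_treeDist hg hw
    have := add_sub_two_mul_le_treeDist hg (right_mem_uIcc (a := x) (b := y))
    linarith

lemma exists_treeDist_le_on_Icc (hg : Continuous g) :
    ∃ D, ∀ x ∈ Icc (0 : ℝ) 1, ∀ y ∈ Icc (0 : ℝ) 1, treeDist g x y ≤ D := by
  obtain ⟨M, hM⟩ := isCompact_Icc.exists_bound_of_continuousOn hg.continuousOn
  refine ⟨4 * M, fun x hx y hy => ?_⟩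
  obtain ⟨w, hw, hxy⟩ := exists_treeDist_eq hg x y
  have hwI : w ∈ Icc (0 : ℝ) 1 := ordConnected_Icc.uIcc_subset hx hy hw
  rw [hxy]
  linarith [le_abs_self (g x), le_abs_self (g y), neg_abs_le (g w),
    (Real.norm_eq_abs _ ▸ hM x hx : |g x| ≤ M), (Real.norm_eq_abs _ ▸ hM y hy : |g y| ≤ M),
    (Real.norm_eq_abs _ ▸ hM w hwI : |g w| ≤ M)]

end TreeDist

structure IsPseudoDist {X : Type*} (d : X → X → ℝ) : Prop where
  self : ∀ x, d x x = 0
  comm : ∀ x y, d x y = d y x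
  triangle : ∀ x y z, d x z ≤ d x y + d y z

lemma isPseudoDist_treeDist {g : ℝ → ℝ} (hg : Continuous g) : IsPseudoDist (treeDist g) :=
  ⟨treeDist_self g, treeDist_comm g, treeDist_triangle hg⟩

section Separated

variable {X : Type*} {d : X → X → ℝ} {A : Set X} {r : ℝ}

def IsSeparatedBy (d : X → X → ℝ) (r : ℝ) (s : Finset X) : Prop :=
  ∀ x ∈ s, ∀ y ∈ s, x ≠ y → r < d x y

lemma IsSeparatedBy.mono {s t : Finset X} (h : IsSeparatedBy d r t) (hst : s ⊆ t) :
    IsSeparatedBy d r s :=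
  fun x hx y hy => h x (hst hx) y (hst hy)

/-- `Nsep` is an `sSup` in `ℕ`, which is `0` for an unbounded set: hence the `BddAbove (sepCards …)`
hypotheses below. -/
def sepCards (d : X → X → ℝ) (A : Set X) (r : ℝ) : Set ℕ :=
  {n | ∃ s : Finset X, (s : Set X) ⊆ A ∧ s.card = n ∧ IsSeparatedBy d r s}

lemma card_le_Nsep (hbdd : BddAbove (sepCards d A r)) {s : Finset X} (hsA : (s : Set X) ⊆ A)
    (hs : IsSeparatedBy d r s) : s.card ≤ Nsep d A r :=
  le_csSup hbdd ⟨s, hsA, rfl, hs⟩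

lemma exists_isSeparatedBy_card_eq_Nsep (hbdd : BddAbove (sepCards d A r)) :
    ∃ s : Finset X, (s : Set X) ⊆ A ∧ s.card = Nsep d A r ∧ IsSeparatedBy d r s :=
  have hne : (sepCards d A r).Nonempty := ⟨0, ∅, by simp, rfl, by simp [IsSeparatedBy]⟩
  Nat.sSup_mem hne hbdd

/-- A maximal `r`-separated set is an `r`-net. -/
lemma exists_net_card_eq_Nsep (hd : IsPseudoDist d) (hbdd : BddAbove (sepCards d A r))
    (hr : 0 ≤ r) :
    ∃ s : Finset X, (s : Set X) ⊆ A ∧ s.card = Nsep d A r ∧ ∀ y ∈ A, ∃ x ∈ s, d x y ≤ r := by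
  classical
  obtain ⟨s, hsA, hcard, hs⟩ := exists_isSeparatedBy_card_eq_Nsep hbdd
  refine ⟨s, hsA, hcard, fun y hy => ?_⟩
  by_contra! hfar
  have hys : y ∉ s := fun hys => by linarith [hfar y hys, hd.self y]
  have hsep : IsSeparatedBy d r (insert y s) := by
    intro u hu v hv huv
    rw [Finset.mem_insert] at hu hv
    rcases hu with rfl | hu <;> rcases hv with rfl | hv
    · exact absurd rfl huv
    · exact hd.comm u v ▸ hfar v hv
    · exact hfar u hu
    · exact hs u hu v hv huv
  have := card_le_Nsep hbdd (by simpa [Set.insert_subset_iff] using ⟨hy, hsA⟩) hsep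
  rw [Finset.card_insert_of_notMem hys] at this
  omega

end Separated

section Doubling

variable {X : Type*} {d : X → X → ℝ} {A : Set X} {K : ℕ}

def IsDoublingOn (d : X → X → ℝ) (A : Set X) (K : ℕ) : Prop :=
  ∀ x ∈ A, ∀ R : ℝ, 0 < R → ∃ s : Finset X, (s : Set X) ⊆ A ∧ s.card ≤ K ∧
    ∀ y ∈ A, d x y < 2 * R → ∃ c ∈ s, d c y < R

lemma card_le_pow_of_isDoublingOn (hd : IsPseudoDist d) (hK : IsDoublingOn d A K) (j : ℕ)
    {R ρ : ℝ} (hR : 0 < R) (hj : 4 * R ≤ 2 ^ j * ρ) {x : X} (hx : x ∈ A) {P : Finset X}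
    (hPA : (P : Set X) ⊆ A) (hP : IsSeparatedBy d ρ P) (hball : ∀ u ∈ P, d x u < 2 * R) :
    P.card ≤ K ^ j := by
  induction j generalizing R x P with
  | zero =>
    refine (Finset.card_le_one.2 fun u hu v hv => ?_).trans (pow_zero K).ge
    by_contra huv
    have := hd.triangle u x v
    rw [hd.comm u x] at this
    linarith [hP u hu v hv huv, hball u hu, hball v hv]
  | succ j ih =>
    classical
    obtain ⟨s, hsA, hsK, hcover⟩ := hK x hx R hR
    choose! σ hσs hσ using fun u (hu : u ∈ P) => hcover u (hPA hu) (hball u hu)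
    have hfiber : ∀ c ∈ s, (P.filter (σ · = c)).card ≤ K ^ j := by
      intro c hc
      refine ih (R := R / 2) (by positivity) (by rw [pow_succ] at hj; linarith) (hsA hc)
        (fun u hu => hPA (Finset.mem_filter.1 hu).1) (hP.mono (Finset.filter_subset _ _)) ?_
      intro u hu
      obtain ⟨huP, rfl⟩ := Finset.mem_filter.1 hu
      linarith [hσ u huP]
    calc P.card ≤ K ^ j * s.card := Finset.card_le_mul_card_image_of_maps_to hσs _ hfiber
      _ ≤ K ^ (j + 1) := by rw [pow_succ]; exact Nat.mul_le_mul_left _ hsK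

lemma bddAbove_sepCards_of_isDoublingOn (hd : IsPseudoDist d) (hK : IsDoublingOn d A K)
    {D : ℝ} (hD : ∀ x ∈ A, ∀ y ∈ A, d x y ≤ D) {r : ℝ} (hr : 0 < r) :
    BddAbove (sepCards d A r) := by
  obtain ⟨j, hj⟩ := pow_unbounded_of_one_lt (4 * (|D| + 1) / r) one_lt_two
  rw [div_lt_iff₀ hr] at hj
  refine ⟨K ^ j, ?_⟩
  rintro _ ⟨s, hsA, rfl, hs⟩
  rcases s.eq_empty_or_nonempty with rfl | ⟨x, hx⟩
  · simp
  · refine card_le_pow_of_isDoublingOn hd hK j (R := |D| + 1) (by positivity) hj.le (hsA hx)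
      hsA hs fun u hu => ?_
    linarith [hD x (hsA hx) u (hsA hu), le_abs_self D, abs_nonneg D]

lemma Nsep_le_pow_mul_Nsep (hd : IsPseudoDist d) (hK : IsDoublingOn d A K) {r R : ℝ}
    (hbr : BddAbove (sepCards d A r)) (hbR : BddAbove (sepCards d A R)) (hR : 0 < R) {j : ℕ}
    (hj : 4 * R ≤ 2 ^ j * r) : Nsep d A r ≤ K ^ j * Nsep d A R := by
  classical
  obtain ⟨P, hPA, hPcard, hP⟩ := exists_isSeparatedBy_card_eq_Nsep hbr
  obtain ⟨T, hTA, hTcard, hT⟩ := exists_net_card_eq_Nsep hd hbR hR.le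
  choose! σ hσT hσ using fun u (hu : u ∈ P) => hT u (hPA hu)
  have hfiber : ∀ c ∈ T, (P.filter (σ · = c)).card ≤ K ^ j := by
    intro c hc
    refine card_le_pow_of_isDoublingOn hd hK j hR hj (hTA hc)
      (fun u hu => hPA (Finset.mem_filter.1 hu).1) (hP.mono (Finset.filter_subset _ _)) ?_
    intro u hu
    obtain ⟨huP, rfl⟩ := Finset.mem_filter.1 hu
    linarith [hσ u huP]
  rw [← hPcard, ← hTcard]
  exact Finset.card_le_mul_card_image_of_maps_to hσT _ hfiber

end Doubling

section DoublingTree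

variable {g : ℝ → ℝ} {K : ℕ}

lemma bddAbove_sepCards_treeDist (hg : Continuous g)
    (hK : IsDoublingOn (treeDist g) (Icc 0 1) K) {r : ℝ} (hr : 0 < r) :
    BddAbove (sepCards (treeDist g) (Icc 0 1) r) :=
  have ⟨_, hD⟩ := exists_treeDist_le_on_Icc hg
  bddAbove_sepCards_of_isDoublingOn (isPseudoDist_treeDist hg) hK hD hr

lemma Nsep_treeDist_le_pow_mul (hg : Continuous g)
    (hK : IsDoublingOn (treeDist g) (Icc 0 1) K) {r R : ℝ} (hr : 0 < r) (hR : 0 < R) {j : ℕ}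
    (hj : 4 * R ≤ 2 ^ j * r) :
    Nsep (treeDist g) (Icc 0 1) r ≤ K ^ j * Nsep (treeDist g) (Icc 0 1) R :=
  Nsep_le_pow_mul_Nsep (isPseudoDist_treeDist hg) hK (bddAbove_sepCards_treeDist hg hK hr)
    (bddAbove_sepCards_treeDist hg hK hR) hR hj

end DoublingTree

section StepChain

variable {f g : ℝ → ℝ} {r : ℝ} {s t : Set ℝ} {n : ℕ} {x : ℕ → ℝ}

/-- Indexed by `ℕ` rather than by `Fin` as in `prVar`, so that chains are cut and shifted without
casts. -/
def IsStepChain (f : ℝ → ℝ) (r : ℝ) (s : Set ℝ) (n : ℕ) (x : ℕ → ℝ) : Prop :=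
  (∀ i ≤ n, x i ∈ s) ∧ ∀ i < n, x i < x (i + 1) ∧ |f (x i) - f (x (i + 1))| = r

lemma IsStepChain.lt_of_lt (h : IsStepChain f r s n x) {i j : ℕ} (hij : i < j) (hj : j ≤ n) :
    x i < x j := by
  induction j, hij using Nat.le_induction with
  | base => exact (h.2 i hj).1
  | succ j hij ih => exact (ih (by omega)).trans (h.2 j hj).1

lemma IsStepChain.le_of_le (h : IsStepChain f r s n x) {i j : ℕ} (hij : i ≤ j) (hj : j ≤ n) :
    x i ≤ x j := by
  rcases hij.eq_or_lt with rfl | hij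
  · exact le_rfl
  · exact (h.lt_of_lt hij hj).le

lemma varSum_eq_of_forall_abs_eq {p : ℝ} {y : Fin (n + 1) → ℝ}
    (h : ∀ i : Fin n, |f (y i.castSucc) - f (y i.succ)| = r) : varSum f p n y = n * r ^ p := by
  simp [varSum, h]

lemma ofReal_mul_le_prVar (p : ℝ) (h : IsStepChain f r (Icc 0 1) n x) :
    ENNReal.ofReal (n * r ^ p) ≤ prVar f p r := by
  have hsteps : ∀ i : Fin n, |f (x (i.castSucc : ℕ)) - f (x (i.succ : ℕ))| = r :=
    fun i => by simpa using (h.2 i i.2).2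
  have hpart : IsPartition n fun i => x i :=
    ⟨Fin.strictMono_iff_lt_succ.2 fun i => by simpa using (h.2 i i.2).1,
      fun i => h.1 i (Nat.lt_succ_iff.1 i.2)⟩
  rw [← varSum_eq_of_forall_abs_eq (y := fun i : Fin (n + 1) => x i) hsteps]
  exact le_iSup₂_of_le n (fun i : Fin (n + 1) => x i) <| le_iSup₂_of_le hpart hsteps le_rfl

lemma prVar_le_ofReal (p : ℝ) (hr : 0 ≤ r) {B : ℕ}
    (hB : ∀ n x, IsStepChain f r (Icc 0 1) n x → n ≤ B) :
    prVar f p r ≤ ENNReal.ofReal (B * r ^ p) := by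
  refine iSup_le fun n => iSup_le fun y => iSup_le fun hpart => iSup_le fun hsteps => ?_
  rw [varSum_eq_of_forall_abs_eq hsteps]
  refine ENNReal.ofReal_le_ofReal (mul_le_mul_of_nonneg_right ?_ (Real.rpow_nonneg hr p))
  have hchain : IsStepChain f r (Icc 0 1) n fun i => y ⟨min i n, by omega⟩ := by
    refine ⟨fun i _ => hpart.2 _, fun i hi => ?_⟩
    have e₀ : (⟨min i n, by omega⟩ : Fin (n + 1)) = (⟨i, hi⟩ : Fin n).castSucc :=
      Fin.ext (min_eq_left hi.le)
    have e₁ : (⟨min (i + 1) n, by omega⟩ : Fin (n + 1)) = (⟨i, hi⟩ : Fin n).succ :=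
      Fin.ext (min_eq_left hi)
    beta_reduce
    rw [e₀, e₁]
    exact ⟨hpart.1 Fin.castSucc_lt_succ, hsteps _⟩
  exact_mod_cast hB n _ hchain

lemma IsStepChain.shift (h : IsStepChain f r s n x) {c e : ℝ} (hst : ∀ z ∈ s, z + c ∈ t)
    (hfg : ∀ z ∈ s, g (z + c) = f z + e) : IsStepChain g r t n fun i => x i + c := by
  refine ⟨fun i hi => hst _ (h.1 i hi), fun i hi => ⟨by linarith [(h.2 i hi).1], ?_⟩⟩
  rw [hfg _ (h.1 i hi.le), hfg _ (h.1 (i + 1) hi), add_sub_add_right_eq_sub]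
  exact (h.2 i hi).2

lemma IsStepChain.le_of_split (h : IsStepChain f r s n x) (c : ℝ) {B : ℕ}
    (hlt : ∀ m y, IsStepChain f r (s ∩ Iio c) m y → m ≤ B)
    (hge : ∀ m y, IsStepChain f r (s ∩ Ici c) m y → m ≤ B) : n ≤ 2 * B + 1 := by
  classical
  by_cases hex : ∃ k, k ≤ n ∧ c ≤ x k
  · obtain ⟨hkn, hck⟩ := Nat.find_spec hex
    have hafter : n - Nat.find hex ≤ B :=
      hge _ (fun i => x (Nat.find hex + i)) ⟨fun i hi => ⟨h.1 _ (by omega),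
        hck.trans (h.le_of_le (by omega) (by omega))⟩, fun i hi => h.2 _ (by omega)⟩
    rcases Nat.eq_zero_or_pos (Nat.find hex) with hk | hk
    · omega
    · have hbefore : Nat.find hex - 1 ≤ B := by
        refine hlt _ x ⟨fun i hi => ⟨h.1 i (by omega), ?_⟩, fun i hi => h.2 i (by omega)⟩
        have := Nat.find_min hex (show i < Nat.find hex by omega)
        exact not_le.1 fun hci => this ⟨by omega, hci⟩
      omega
  · push Not at hex
    have := hlt n x ⟨fun i hi => ⟨h.1 i hi, hex i hi⟩, h.2⟩
    omega

end StepChain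

section ChainsInTree

variable {g : ℝ → ℝ} {r : ℝ} {s : Set ℝ} {n : ℕ} {x : ℕ → ℝ}

lemma exists_step_of_lt_treeDist (hg : Continuous g) (hr : 0 < r) {c u v : ℝ} (hcu : c ≤ u)
    (huv : u ≤ v) (h : 4 * r < treeDist g u v) : ∃ z ∈ Ioc c v, |g c - g z| = r := by
  obtain ⟨w, hw, hdist⟩ := exists_treeDist_eq hg u v
  rw [uIcc_of_le huv] at hw
  obtain ⟨y, hy, hry⟩ : ∃ y ∈ Icc u v, r ≤ |g c - g y| := by
    by_contra! hnear
    have := abs_lt.1 (hnear u (left_mem_Icc.2 huv))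
    have := abs_lt.1 (hnear v (right_mem_Icc.2 huv))
    have := abs_lt.1 (hnear w hw)
    linarith
  obtain ⟨z, hz, hzr⟩ := intermediate_value_Icc (f := fun z => |g c - g z|) (hcu.trans hy.1)
    (continuous_const.sub hg).abs.continuousOn (show r ∈ Icc |g c - g c| |g c - g y| by
      simpa using ⟨hr.le, hry⟩)
  refine ⟨z, ⟨hz.1.lt_of_ne ?_, hz.2.trans hy.2⟩, hzr⟩
  rintro rfl
  simp only [sub_self, abs_zero] at hzr
  exact hr.ne hzr

lemma exists_isStepChain_of_lt_treeDist (hg : Continuous g) (hr : 0 < r) {t : ℕ → ℝ} (n : ℕ)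
    (ht : ∀ i < n, t i ≤ t (i + 1) ∧ 4 * r < treeDist g (t i) (t (i + 1))) :
    ∃ x, IsStepChain g r (Icc (t 0) (t n)) n x := by
  induction n with
  | zero =>
    exact ⟨fun _ => t 0, fun _ _ => left_mem_Icc.2 le_rfl, fun i hi => absurd hi i.not_lt_zero⟩
  | succ k ih =>
    obtain ⟨x, hx⟩ := ih fun i hi => ht i (by omega)
    have hxk := hx.1 k le_rfl
    obtain ⟨htk, hsep⟩ := ht k k.lt_succ_self
    obtain ⟨z, ⟨hxz, hzt⟩, hz⟩ := exists_step_of_lt_treeDist hg hr hxk.2 htk hsep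
    refine ⟨Function.update x (k + 1) z, fun i hi => ?_, fun i hi => ?_⟩
    · rcases hi.eq_or_lt with rfl | hi
      · rw [Function.update_self]
        exact ⟨hxk.1.trans hxz.le, hzt⟩
      · rw [Function.update_of_ne (by omega)]
        exact Icc_subset_Icc_right htk (hx.1 i (by omega))
    · rw [Function.update_of_ne (by omega)]
      rcases (Nat.lt_succ_iff.1 hi).eq_or_lt with rfl | hi
      · rw [Function.update_self]
        exact ⟨hxz, hz⟩
      · rw [Function.update_of_ne (by omega)]
        exact hx.2 i hi

lemma exists_isStepChain_of_isSeparatedBy (hg : Continuous g) (hr : 0 < r)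
    (hs : s.OrdConnected) {S : Finset ℝ} (hSs : (S : Set ℝ) ⊆ s)
    (hS : IsSeparatedBy (treeDist g) (4 * r) S)
    (hcard : S.card = n + 1) : ∃ x, IsStepChain g r s n x := by
  set e := S.orderEmbOfFin hcard
  set t : ℕ → ℝ := fun i => e ⟨min i n, by omega⟩
  have he : ∀ i (hi : i ≤ n), t i = e ⟨i, by omega⟩ :=
    fun i hi => congrArg e (Fin.ext (min_eq_left hi))
  have hmem : ∀ i, t i ∈ S := fun i => S.orderEmbOfFin_mem hcard _
  have ht : ∀ i < n, t i ≤ t (i + 1) ∧ 4 * r < treeDist g (t i) (t (i + 1)) := by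
    intro i hi
    have hlt : t i < t (i + 1) := by
      rw [he i hi.le, he (i + 1) hi]
      exact e.strictMono (Fin.mk_lt_mk.2 i.lt_succ_self)
    exact ⟨hlt.le, hS _ (hmem i) _ (hmem (i + 1)) hlt.ne⟩
  obtain ⟨x, hx⟩ := exists_isStepChain_of_lt_treeDist hg hr n ht
  exact ⟨x, fun i hi => hs.out (hSs (hmem 0)) (hSs (hmem n)) (hx.1 i hi), hx.2⟩

lemma IsStepChain.exists_top_bottom (h : IsStepChain g r s n x) {i : ℕ} (hi : i < n) :
    ∃ w ∈ Icc (x i) (x (i + 1)), ∃ b ∈ Icc (x i) (x (i + 1)), g b + r = g w := by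
  obtain ⟨hlt, hstep⟩ := h.2 i hi
  rcases le_total (g (x (i + 1))) (g (x i)) with hle | hle
  · refine ⟨x i, left_mem_Icc.2 hlt.le, x (i + 1), right_mem_Icc.2 hlt.le, ?_⟩
    rw [← hstep, abs_of_nonneg (by linarith)]; ring
  · refine ⟨x (i + 1), right_mem_Icc.2 hlt.le, x i, left_mem_Icc.2 hlt.le, ?_⟩
    rw [← hstep, abs_of_nonpos (by linarith)]; ring

lemma sub_le_three_mul_of_treeDist_le (hg : Continuous g) {c w₁ w₂ w₃ b ρ : ℝ}
    (hb : b ∈ Icc w₁ w₃) (h₁ : treeDist g c w₁ ≤ ρ) (h₂ : treeDist g c w₂ ≤ ρ)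
    (h₃ : treeDist g c w₃ ≤ ρ) : g w₂ - g b ≤ 3 * ρ := by
  have h₁₃ := add_sub_two_mul_le_treeDist hg (Icc_subset_uIcc hb)
  have d₁₃ := treeDist_triangle hg w₁ c w₃
  have d₁₂ := (abs_sub_le_treeDist hg w₁ w₂).trans (treeDist_triangle hg w₁ c w₂)
  have d₃₂ := (abs_sub_le_treeDist hg w₃ w₂).trans (treeDist_triangle hg w₃ c w₂)
  rw [treeDist_comm g w₁ c] at d₁₃ d₁₂
  rw [treeDist_comm g w₃ c] at d₃₂
  linarith [(abs_le.1 d₁₂).1, (abs_le.1 d₃₂).1]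

lemma card_le_two_of_forall_lt_not_lt {α : Type*} [LinearOrder α] {s : Finset α}
    (h : ∀ i ∈ s, ∀ j ∈ s, ∀ k ∈ s, i < j → ¬ j < k) : s.card ≤ 2 := by
  by_contra! hs
  obtain ⟨t, hts, ht⟩ := Finset.exists_subset_card_eq (show 3 ≤ s.card by omega)
  have hmem : ∀ i, t.orderEmbOfFin ht i ∈ s := fun i => hts (t.orderEmbOfFin_mem ht i)
  exact h _ (hmem 0) _ (hmem 1) _ (hmem 2) ((t.orderEmbOfFin ht).strictMono (by decide))
    ((t.orderEmbOfFin ht).strictMono (by decide))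

/-- Steps sharing a nearby point of a `ρ`-net come at most in pairs: the bottom of a middle step
would lie between the tops of the outer two. -/
lemma IsStepChain.le_two_mul_Nsep (h : IsStepChain g r (Icc 0 1) n x) (hg : Continuous g)
    {ρ : ℝ} (hρ : 0 ≤ ρ) (hρr : 3 * ρ < r)
    (hbdd : BddAbove (sepCards (treeDist g) (Icc 0 1) ρ)) :
    n ≤ 2 * Nsep (treeDist g) (Icc 0 1) ρ := by
  classical
  obtain ⟨T, -, hTcard, hT⟩ := exists_net_card_eq_Nsep (isPseudoDist_treeDist hg) hbdd hρ
  choose! w hw b hb hwb using fun i (hi : i < n) => h.exists_top_bottom hi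
  have hwI : ∀ i < n, w i ∈ Icc (0 : ℝ) 1 := fun i hi =>
    ordConnected_Icc.out (h.1 i hi.le) (h.1 (i + 1) hi) (hw i hi)
  choose! σ hσT hσ using fun i (hi : i ∈ Finset.range n) =>
    hT (w i) (hwI i (Finset.mem_range.1 hi))
  have hfiber : ∀ c ∈ T, ((Finset.range n).filter (σ · = c)).card ≤ 2 := by
    intro c _
    refine card_le_two_of_forall_lt_not_lt fun i hi j hj k hk hij hjk => ?_
    simp only [Finset.mem_filter, Finset.mem_range] at hi hj hk
    have hbj : b j ∈ Icc (w i) (w k) :=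
      ⟨(hw i hi.1).2.trans ((h.le_of_le hij hj.1.le).trans (hb j hj.1).1),
        (hb j hj.1).2.trans ((h.le_of_le hjk hk.1.le).trans (hw k hk.1).1)⟩
    have := sub_le_three_mul_of_treeDist_le hg hbj (hi.2 ▸ hσ i (by simpa using hi.1))
      (hj.2 ▸ hσ j (by simpa using hj.1)) (hk.2 ▸ hσ k (by simpa using hk.1))
    linarith [hwb j hj.1]
  simpa [hTcard, mul_comm] using Finset.card_le_mul_card_image_of_maps_to hσT 2 hfiber

end ChainsInTree

section Circle

variable {f : ℝ → ℝ} {a r : ℝ}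

lemma exists_ofReal_mul_le_prVar_and_card_le {g : ℝ → ℝ} (hg : Continuous g) (p : ℝ)
    (hr : 0 < r) {s : Set ℝ} (hs : s.OrdConnected) {c e : ℝ}
    (hsc : ∀ z ∈ s, z + c ∈ Icc (0 : ℝ) 1) (hfg : ∀ z ∈ s, f (z + c) = g z + e)
    {S : Finset ℝ} (hSs : (S : Set ℝ) ⊆ s) (hS : IsSeparatedBy (treeDist g) (4 * r) S) :
    ∃ n : ℕ, ENNReal.ofReal (n * r ^ p) ≤ prVar f p r ∧ S.card ≤ n + 1 := by
  rcases S.eq_empty_or_nonempty with rfl | hne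
  · exact ⟨0, by simp, by simp⟩
  obtain ⟨n, hn⟩ := Nat.exists_eq_add_one_of_ne_zero hne.card_pos.ne'
  obtain ⟨x, hx⟩ := exists_isStepChain_of_isSeparatedBy hg hr hs hSs hS hn
  exact ⟨n, ofReal_mul_le_prVar p (hx.shift hsc hfg), hn.le⟩

/-- Cutting at `1 - a` splits a separated set into two runs, each carried into `[0, 1]` by a
rotation. -/
lemma exists_ofReal_mul_le_prVar_and_Nsep_le (hf : Continuous f) (hper : ∀ x, f (x + 1) = f x)
    (ha : a ∈ Icc (0 : ℝ) 1) (p : ℝ) (hr : 0 < r)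
    (hbdd : BddAbove (sepCards (treeDist fun z => f (z + a) - f a) (Icc 0 1) (4 * r))) :
    ∃ n : ℕ, ENNReal.ofReal (n * r ^ p) ≤ prVar f p r ∧
      Nsep (treeDist fun z => f (z + a) - f a) (Icc 0 1) (4 * r) ≤ 2 * n + 2 := by
  classical
  have hg : Continuous fun z => f (z + a) - f a := by fun_prop
  obtain ⟨T, hTA, hTcard, hT⟩ := exists_isSeparatedBy_card_eq_Nsep hbdd
  obtain ⟨n₁, hn₁, hT₁⟩ := exists_ofReal_mul_le_prVar_and_card_le (f := f) hg p hr
    (s := Icc 0 (1 - a)) ordConnected_Icc (c := a) (e := f a)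
    (fun z hz => ⟨by linarith [hz.1, ha.1], by linarith [hz.2]⟩) (fun z _ => by simp)
    (S := T.filter (· ≤ 1 - a)) (fun z hz => by
      obtain ⟨hzT, hz⟩ := Finset.mem_filter.1 hz
      exact ⟨(hTA hzT).1, hz⟩) (hT.mono (Finset.filter_subset _ _))
  obtain ⟨n₂, hn₂, hT₂⟩ := exists_ofReal_mul_le_prVar_and_card_le (f := f) hg p hr
    (s := Ioc (1 - a) 1) ordConnected_Ioc (c := a - 1) (e := f a)
    (fun z hz => ⟨by linarith [hz.1], by linarith [hz.2, ha.2]⟩) (fun z _ => by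
      have := hper (z + (a - 1))
      rw [show z + (a - 1) + 1 = z + a by ring] at this
      simp [this])
    (S := T.filter fun z => ¬ z ≤ 1 - a) (fun z hz => by
      obtain ⟨hzT, hz⟩ := Finset.mem_filter.1 hz
      exact ⟨not_le.1 hz, (hTA hzT).2⟩) (hT.mono (Finset.filter_subset _ _))
  refine ⟨max n₁ n₂, ?_, ?_⟩
  · rcases le_total n₁ n₂ with h | h
    · rwa [max_eq_right h]
    · rwa [max_eq_left h]
  · rw [← hTcard, ← Finset.card_filter_add_card_filter_not (s := T) (· ≤ 1 - a)]
    omega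

lemma prVar_le_ofReal_Nsep (hf : Continuous f) (hper : ∀ x, f (x + 1) = f x)
    (ha : a ∈ Icc (0 : ℝ) 1) (p : ℝ) (hr : 0 < r) {ρ : ℝ} (hρ : 0 ≤ ρ) (hρr : 3 * ρ < r)
    (hbdd : BddAbove (sepCards (treeDist fun z => f (z + a) - f a) (Icc 0 1) ρ)) :
    prVar f p r ≤ ENNReal.ofReal
      ((4 * Nsep (treeDist fun z => f (z + a) - f a) (Icc 0 1) ρ + 1 : ℕ) * r ^ p) := by
  have hg : Continuous fun z => f (z + a) - f a := by fun_prop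
  refine prVar_le_ofReal p hr.le fun n x hx => ?_
  have := hx.le_of_split a (B := 2 * Nsep (treeDist fun z => f (z + a) - f a) (Icc 0 1) ρ)
    (fun m y hy => (hy.shift (t := Icc 0 1) (c := 1 - a) (e := -f a)
      (fun z hz => ⟨by linarith [hz.1.1, ha.2], by linarith [hz.2.out]⟩)
      (fun z _ => by rw [show z + (1 - a) + a = z + 1 by ring, hper, sub_eq_add_neg])
      ).le_two_mul_Nsep hg hρ hρr hbdd)
    (fun m y hy => (hy.shift (t := Icc 0 1) (c := -a) (e := -f a)
      (fun z hz => ⟨by linarith [hz.2.out], by linarith [hz.1.2, ha.1]⟩)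
      (fun z _ => by simp [sub_eq_add_neg])).le_two_mul_Nsep hg hρ hρr hbdd)
  omega

end Circle

section Constants

variable {N : ℕ} {V : ℝ≥0∞} {B ρ ε : ℝ}

lemma ofReal_inv_mul_sub_le {M : ℕ} (hB : 0 ≤ B) (hρ : 0 ≤ ρ) (hρε : ρ ≤ ε)
    (hV : V ≤ ENNReal.ofReal ((4 * M + 1 : ℕ) * ρ)) (hM : (M : ℝ) ≤ B * N) :
    ENNReal.ofReal (4 * B + 1)⁻¹ * V - ENNReal.ofReal ε ≤ N * ENNReal.ofReal ρ := by
  have hMρ : (M : ℝ) * ρ ≤ B * N * ρ := mul_le_mul_of_nonneg_right hM hρ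
  have hBε : 0 ≤ B * ε := mul_nonneg hB (hρ.trans hρε)
  have hNρ : (0 : ℝ) ≤ N * ρ := by positivity
  rw [tsub_le_iff_right]
  calc ENNReal.ofReal (4 * B + 1)⁻¹ * V
      ≤ ENNReal.ofReal (4 * B + 1)⁻¹ * ENNReal.ofReal ((4 * M + 1 : ℕ) * ρ) := by gcongr
    _ = ENNReal.ofReal ((4 * B + 1)⁻¹ * ((4 * M + 1 : ℕ) * ρ)) :=
        (ENNReal.ofReal_mul (by positivity)).symm
    _ ≤ ENNReal.ofReal (N * ρ + ε) := by
        refine ENNReal.ofReal_le_ofReal ((inv_mul_le_iff₀ (by positivity)).2 ?_)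
        push_cast
        nlinarith
    _ = N * ENNReal.ofReal ρ + ENNReal.ofReal ε := by
        rw [ENNReal.ofReal_add hNρ (hρ.trans hρε), ENNReal.ofReal_mul (by positivity),
          ENNReal.ofReal_natCast]

lemma le_ofReal_mul_add {n : ℕ} (hB : 0 ≤ B) (hρ : 0 ≤ ρ) (hρε : (4 * B + 1) * ρ ≤ ε)
    (hn : ENNReal.ofReal (n * ρ) ≤ V) (hN : (N : ℝ) ≤ B * (2 * n + 2)) :
    N * ENNReal.ofReal ρ ≤ ENNReal.ofReal (4 * B + 1) * V + ENNReal.ofReal ε := by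
  have hNρ : (N : ℝ) * ρ ≤ B * (2 * n + 2) * ρ := mul_le_mul_of_nonneg_right hN hρ
  have hBnρ : 0 ≤ B * (n * ρ) := mul_nonneg hB (by positivity)
  calc (N : ℝ≥0∞) * ENNReal.ofReal ρ = ENNReal.ofReal (N * ρ) := by
        rw [ENNReal.ofReal_mul (by positivity), ENNReal.ofReal_natCast]
    _ ≤ ENNReal.ofReal ((4 * B + 1) * (n * ρ) + ε) := ENNReal.ofReal_le_ofReal (by nlinarith)
    _ = ENNReal.ofReal (4 * B + 1) * ENNReal.ofReal (n * ρ) + ENNReal.ofReal ε := by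
        rw [ENNReal.ofReal_add (by positivity) (by nlinarith), ENNReal.ofReal_mul (by positivity)]
    _ ≤ ENNReal.ofReal (4 * B + 1) * V + ENNReal.ofReal ε := by gcongr

end Constants

theorem prVar_comparable_Nsep_of_doubling_general (f : ℝ → ℝ) (hf : Continuous f)
    (hper : ∀ x, f (x + 1) = f x)
    (a : ℝ) (ha : a ∈ Set.Icc (0 : ℝ) 1)
    (p : ℝ) (hp : 1 ≤ p)
    (hdoub : ∃ K : ℕ, ∀ x ∈ Set.Icc (0 : ℝ) 1, ∀ R : ℝ, 0 < R →
      ∃ s : Finset ℝ, (s : Set ℝ) ⊆ Set.Icc (0 : ℝ) 1 ∧ s.card ≤ K ∧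
        ∀ y ∈ Set.Icc (0 : ℝ) 1,
          treeDist (fun z => f (z + a) - f a) x y < 2 * R →
            ∃ c ∈ s, treeDist (fun z => f (z + a) - f a) c y < R) :
    ∃ C : ℝ, 0 < C ∧ ∀ ε : ℝ, 0 < ε → ∃ r₀ : ℝ, 0 < r₀ ∧ ∀ r : ℝ, 0 < r → r < r₀ →
      ENNReal.ofReal C⁻¹ * prVar f p r - ENNReal.ofReal ε ≤
        (Nsep (treeDist (fun z => f (z + a) - f a)) (Set.Icc 0 1) r : ℝ≥0∞) *
          ENNReal.ofReal (r ^ p) ∧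
      (Nsep (treeDist (fun z => f (z + a) - f a)) (Set.Icc 0 1) r : ℝ≥0∞) *
          ENNReal.ofReal (r ^ p) ≤
        ENNReal.ofReal C * prVar f p r + ENNReal.ofReal ε := by
  obtain ⟨K, hK⟩ := hdoub
  have hg : Continuous fun z => f (z + a) - f a := by fun_prop
  have hK4 : (0 : ℝ) ≤ K ^ 4 := by positivity
  refine ⟨4 * K ^ 4 + 1, by positivity, fun ε hε => ⟨min 1 (ε / (4 * K ^ 4 + 1)), by positivity,
    fun r hr hrr => ?_⟩⟩
  have hrp : r ^ p ≤ r := Real.rpow_le_self_of_le_one hr.le (lt_min_iff.1 hrr).1.le hp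
  have hrε : (4 * (K : ℝ) ^ 4 + 1) * r ^ p ≤ ε := by
    have := (lt_div_iff₀' (by positivity)).1 (lt_min_iff.1 hrr).2
    nlinarith
  have hV := prVar_le_ofReal_Nsep hf hper ha p hr (ρ := r / 4) (by positivity) (by linarith)
    (bddAbove_sepCards_treeDist hg hK (by positivity))
  obtain ⟨n, hn, hNn⟩ := exists_ofReal_mul_le_prVar_and_Nsep_le hf hper ha p hr
    (bddAbove_sepCards_treeDist hg hK (by positivity))
  have hN₁ := Nsep_treeDist_le_pow_mul hg hK (j := 4) (r := r / 4) (R := r) (by positivity) hr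
    (by linarith)
  have hN₂ := (Nsep_treeDist_le_pow_mul hg hK (j := 4) (R := 4 * r) hr (by positivity)
    (by linarith)).trans (Nat.mul_le_mul_left _ hNn)
  exact ⟨ofReal_inv_mul_sub_le hK4 (by positivity) (by nlinarith [Real.rpow_nonneg hr.le p]) hV
      (by exact_mod_cast hN₁),
    le_ofReal_mul_add hK4 (by positivity) hrε hn (by exact_mod_cast hN₂)⟩

/-- If the real tree of a non-constant continuous circle mapping `f` is a doubling metric
space, then there is a universal constant `C > 0` such that for all `ε > 0` there is
`r₀ > 0` with `C⁻¹ V_r^p(f) - ε ≤ N_r(T(f))·r^p ≤ C V_r^p(f) + ε` for all `0 < r < r₀`. -/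
theorem prVar_comparable_Nsep_of_doubling (f : ℝ → ℝ) (hf : Continuous f)
    (hper : ∀ x, f (x + 1) = f x) (hnc : ∃ x y, f x ≠ f y)
    (a : ℝ) (ha : a ∈ Set.Icc (0 : ℝ) 1) (hmin : ∀ x ∈ Set.Icc (0 : ℝ) 1, f a ≤ f x)
    (p : ℝ) (hp : 1 ≤ p)
    (hdoub : ∃ K : ℕ, ∀ x ∈ Set.Icc (0 : ℝ) 1, ∀ R : ℝ, 0 < R →
      ∃ s : Finset ℝ, (s : Set ℝ) ⊆ Set.Icc (0 : ℝ) 1 ∧ s.card ≤ K ∧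
        ∀ y ∈ Set.Icc (0 : ℝ) 1,
          treeDist (fun z => f (z + a) - f a) x y < 2 * R →
            ∃ c ∈ s, treeDist (fun z => f (z + a) - f a) c y < R) :
    ∃ C : ℝ, 0 < C ∧ ∀ ε : ℝ, 0 < ε → ∃ r₀ : ℝ, 0 < r₀ ∧ ∀ r : ℝ, 0 < r → r < r₀ →
      ENNReal.ofReal C⁻¹ * prVar f p r - ENNReal.ofReal ε ≤
        (Nsep (treeDist (fun z => f (z + a) - f a)) (Set.Icc 0 1) r : ℝ≥0∞) *
          ENNReal.ofReal (r ^ p) ∧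
      (Nsep (treeDist (fun z => f (z + a) - f a)) (Set.Icc 0 1) r : ℝ≥0∞) *
          ENNReal.ofReal (r ^ p) ≤
        ENNReal.ofReal C * prVar f p r + ENNReal.ofReal ε :=
  prVar_comparable_Nsep_of_doubling_general f hf hper a ha p hp hdoub
end

section
/- Let f : [0,1] → ℝ be continuous. Then the upper box dimension of the graph of f satisfies ubd Γ(f) ≤ 2 − 1/I(f). -/
open Set Filter Metric Topology
open scoped ENNReal NNReal

/-!
Cut `[0,1]` into `⌊1/r⌋ + 1` closed columns of width `r`. Over the `j`-th column the graph lies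
in a box of height `ω_j`, the oscillation of `f` on that column, so an `r`-separated subset of the
graph has at most `ω_j / r + 1` points there. Each `ω_j` is an increment of `f` between two points
of the `j`-th column, and these pairs of points are ordered along `[0,1]`, so `∑ ω_j ^ p ≤ V^p(f)`.
By Hölder, `∑ ω_j ≤ (2/r)^(1-1/p) V^p(f)^(1/p)`, hence `N_r(Γ(f)) = O(r^(-(2-1/p)))` whenever
`V^p(f) < ∞`; letting `p ↓ I(f)` gives the theorem.
-/

open Finset

noncomputable section

theorem Nsep_le_of_forall_card_le {X : Type*} {d : X → X → ℝ} {A : Set X} {r B : ℝ}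
    (h : ∀ s : Finset X, (s : Set X) ⊆ A → (∀ x ∈ s, ∀ y ∈ s, x ≠ y → r < d x y) → (#s : ℝ) ≤ B) :
    (Nsep d A r : ℝ) ≤ B := by
  set S := {n | ∃ s : Finset X, (s : Set X) ⊆ A ∧ s.card = n ∧ ∀ x ∈ s, ∀ y ∈ s, x ≠ y → r < d x y}
  have hbdd : BddAbove S := by
    refine ⟨⌈B⌉₊, ?_⟩
    rintro _ ⟨s, hsA, rfl, hsep⟩
    exact_mod_cast (h s hsA hsep).trans (Nat.le_ceil B)
  obtain ⟨s, hsA, hs, hsep⟩ : sSup S ∈ S := Nat.sSup_mem ⟨0, ∅, by simp⟩ hbdd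
  rw [Nsep, ← hs]
  exact h s hsA hsep

theorem ubdOf_le_of_eventually_le_mul_rpow {N : ℝ → ℕ} {C s : ℝ} (hC : 0 < C)
    (h : ∀ᶠ r in 𝓝[>] 0, (N r : ℝ) ≤ C * r ^ (-s)) : ubdOf N ≤ ENNReal.ofReal s := by
  have hlog : Tendsto (fun r => -Real.log r) (𝓝[>] 0) atTop :=
    tendsto_neg_atBot_atTop.comp Real.tendsto_log_nhdsGT_zero
  have hlim : Tendsto (fun r => ENNReal.ofReal (s + Real.log C / -Real.log r)) (𝓝[>] 0)
      (𝓝 (ENNReal.ofReal s)) := by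
    simpa using ENNReal.tendsto_ofReal (tendsto_const_nhds.add (tendsto_const_nhds.div_atTop hlog))
  refine (limsup_le_limsup ?_).trans_eq hlim.limsup_eq
  filter_upwards [h, Ioo_mem_nhdsGT one_pos] with r hN ⟨hr0, hr1⟩
  have hlogr : 0 < -Real.log r := neg_pos.2 (Real.log_neg hr0 hr1)
  rcases (N r).eq_zero_or_pos with h0 | hpos
  · simp [h0]
  refine ENNReal.ofReal_le_ofReal ?_
  rw [div_le_iff₀ hlogr, add_mul, div_mul_cancel₀ _ hlogr.ne']
  calc Real.log (N r) ≤ Real.log (C * r ^ (-s)) := Real.log_le_log (by exact_mod_cast hpos) hN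
    _ = s * -Real.log r + Real.log C := by
      rw [Real.log_mul hC.ne' (by positivity), Real.log_rpow hr0]; ring

theorem sum_le_card_rpow_mul_sum_rpow {ι : Type*} {s : Finset ι} {g : ι → ℝ} {p : ℝ}
    (hp : 1 ≤ p) (hg : ∀ i ∈ s, 0 ≤ g i) :
    ∑ i ∈ s, g i ≤ (#s : ℝ) ^ (1 - 1 / p) * (∑ i ∈ s, g i ^ p) ^ (1 / p) := by
  have hp0 : 0 < p := by linarith
  have hsum : 0 ≤ ∑ i ∈ s, g i := sum_nonneg hg
  calc ∑ i ∈ s, g i = ((∑ i ∈ s, g i) ^ p) ^ (1 / p) := by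
        rw [← Real.rpow_mul hsum, mul_one_div_cancel hp0.ne', Real.rpow_one]
    _ ≤ ((#s : ℝ) ^ (p - 1) * ∑ i ∈ s, g i ^ p) ^ (1 / p) :=
        Real.rpow_le_rpow (by positivity)
          (Real.rpow_sum_le_const_mul_sum_rpow_of_nonneg s hp hg) (by positivity)
    _ = (#s : ℝ) ^ (1 - 1 / p) * (∑ i ∈ s, g i ^ p) ^ (1 / p) := by
        rw [Real.mul_rpow (by positivity) (sum_nonneg fun i hi => Real.rpow_nonneg (hg i hi) p),
          ← Real.rpow_mul (by positivity)]
        congr 2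
        field_simp

def column (r : ℝ) (j : ℕ) : Set ℝ := Icc (j * r) ((j + 1) * r) ∩ Icc 0 1

def osc (f : ℝ → ℝ) (s : Set ℝ) : ℝ := sSup (f '' s) - sInf (f '' s)

section Oscillation

variable {f : ℝ → ℝ} {r : ℝ}

theorem osc_nonneg {s : Set ℝ} (hs : IsCompact s) (hf : ContinuousOn f s) : 0 ≤ osc f s :=
  have hfs := hs.image_of_continuousOn hf
  sub_nonneg.2 (Real.sInf_le_sSup _ hfs.bddBelow hfs.bddAbove)

theorem exists_le_abs_sub_eq_osc {s : Set ℝ} (hs : IsCompact s) (hne : s.Nonempty)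
    (hf : ContinuousOn f s) : ∃ a ∈ s, ∃ b ∈ s, a ≤ b ∧ |f a - f b| = osc f s := by
  have hfs := hs.image_of_continuousOn hf
  obtain ⟨u, hu, hfu⟩ := hfs.sSup_mem (hne.image f)
  obtain ⟨v, hv, hfv⟩ := hfs.sInf_mem (hne.image f)
  have huv : |f u - f v| = osc f s := by
    rw [osc, ← hfu, ← hfv, abs_of_nonneg (sub_nonneg.2 (hfv ▸ csInf_le hfs.bddBelow ⟨u, hu, rfl⟩))]
  rcases le_total u v with h | h
  · exact ⟨u, hu, v, hv, h, huv⟩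
  · exact ⟨v, hv, u, hu, h, abs_sub_comm (f v) (f u) ▸ huv⟩

theorem isCompact_column (r : ℝ) (j : ℕ) : IsCompact (column r j) :=
  isCompact_Icc.inter isCompact_Icc

theorem mem_column_floor (hr : 0 < r) {x : ℝ} (hx : x ∈ Icc (0 : ℝ) 1) : x ∈ column r ⌊x / r⌋₊ :=
  ⟨⟨(le_div_iff₀ hr).1 (Nat.floor_le (div_nonneg hx.1 hr.le)),
    ((div_lt_iff₀ hr).1 (Nat.lt_floor_add_one _)).le⟩, hx⟩

theorem exists_le_abs_sub_eq_osc_column (hf : ContinuousOn f (Icc 0 1)) (hr : 0 < r) {j : ℕ}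
    (hj : j ≤ ⌊1 / r⌋₊) :
    ∃ a ∈ column r j, ∃ b ∈ column r j, a ≤ b ∧ |f a - f b| = osc f (column r j) := by
  have hjr : j * r ≤ 1 :=
    calc j * r ≤ ⌊1 / r⌋₊ * r := by gcongr
      _ ≤ 1 := (le_div_iff₀ hr).1 (Nat.floor_le (by positivity))
  exact exists_le_abs_sub_eq_osc (isCompact_column r j)
    ⟨j * r, ⟨le_rfl, by nlinarith⟩, by positivity, hjr⟩ (hf.mono inter_subset_right)

end Oscillation

section Counting

variable {f : ℝ → ℝ} {r : ℝ}

theorem card_le_osc_div_add_one (hf : ContinuousOn f (Icc 0 1)) (hr : 0 < r) (j : ℕ)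
    {t : Finset (ℝ × ℝ)} (ht : ∀ q ∈ t, q.1 ∈ column r j ∧ q.2 = f q.1)
    (hsep : ∀ q ∈ t, ∀ q' ∈ t, q ≠ q' → r < dist q q') :
    (#t : ℝ) ≤ osc f (column r j) / r + 1 := by
  set m := sInf (f '' column r j)
  have hfs := (isCompact_column r j).image_of_continuousOn (hf.mono inter_subset_right)
  have hy : ∀ q ∈ t, 0 ≤ (q.2 - m) / r ∧ (q.2 - m) / r ≤ osc f (column r j) / r := by
    intro q hq
    obtain ⟨hx, hq2⟩ := ht q hq
    have h1 : m ≤ q.2 := hq2 ▸ csInf_le hfs.bddBelow ⟨q.1, hx, rfl⟩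
    have h2 : q.2 ≤ sSup (f '' column r j) := hq2 ▸ le_csSup hfs.bddAbove ⟨q.1, hx, rfl⟩
    exact ⟨by have := sub_nonneg.2 h1; positivity, by rw [osc]; gcongr⟩
  have hmaps : ∀ q ∈ t, ⌊(q.2 - m) / r⌋₊ ∈ range (⌊osc f (column r j) / r⌋₊ + 1) := fun q hq =>
    mem_range.2 (Nat.lt_succ_of_le (Nat.floor_le_floor (hy q hq).2))
  -- two points in the same column at vertical distance `< r` would be `r`-close
  have hinj : Set.InjOn (fun q : ℝ × ℝ => ⌊(q.2 - m) / r⌋₊) t := by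
    intro q hq q' hq' hqq'
    by_contra hne
    refine (hsep q hq q' hq' hne).not_ge ?_
    have hfloor : ⌊(q.2 - m) / r⌋ = ⌊(q'.2 - m) / r⌋ := by
      rw [← Int.natCast_floor_eq_floor (hy q hq).1, ← Int.natCast_floor_eq_floor (hy q' hq').1]
      exact congrArg _ hqq'
    have hy' : |q.2 - q'.2| < r := by
      have := Int.abs_sub_lt_one_of_floor_eq_floor hfloor
      rwa [← sub_div, sub_sub_sub_cancel_right, abs_div, abs_of_pos hr, div_lt_one hr] at this
    have hx := (ht q hq).1.1
    have hx' := (ht q' hq').1.1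
    rw [Prod.dist_eq, Real.dist_eq, Real.dist_eq, max_le_iff, abs_sub_le_iff]
    exact ⟨⟨by linarith [hx.2, hx'.1], by linarith [hx.1, hx'.2]⟩, hy'.le⟩
  calc (#t : ℝ) ≤ (⌊osc f (column r j) / r⌋₊ + 1 : ℕ) := by
        exact_mod_cast (card_le_card_of_injOn _ hmaps hinj).trans (card_range _).le
    _ ≤ osc f (column r j) / r + 1 := by
        push_cast
        gcongr
        exact Nat.floor_le (div_nonneg (osc_nonneg (isCompact_column r j)
          (hf.mono inter_subset_right)) hr.le)

theorem card_le_sum_osc (hf : ContinuousOn f (Icc 0 1)) (hr : 0 < r) {s : Finset (ℝ × ℝ)}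
    (hs : (s : Set (ℝ × ℝ)) ⊆ graphSet f) (hsep : ∀ q ∈ s, ∀ q' ∈ s, q ≠ q' → r < dist q q') :
    (#s : ℝ) ≤ ∑ j ∈ range (⌊1 / r⌋₊ + 1), (osc f (column r j) / r + 1) := by
  classical
  have hmaps : ∀ q ∈ s, ⌊q.1 / r⌋₊ ∈ range (⌊1 / r⌋₊ + 1) := by
    intro q hq
    obtain ⟨x, hx, rfl⟩ := hs hq
    exact mem_range.2 (Nat.lt_succ_of_le (Nat.floor_le_floor (by gcongr; exact hx.2)))
  rw [card_eq_sum_card_fiberwise hmaps, Nat.cast_sum]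
  refine sum_le_sum fun j _ => card_le_osc_div_add_one hf hr j (fun q hq => ?_)
    fun q hq q' hq' => hsep q (mem_filter.1 hq).1 q' (mem_filter.1 hq').1
  obtain ⟨hqs, rfl⟩ := mem_filter.1 hq
  obtain ⟨x, hx, rfl⟩ := hs hqs
  exact ⟨mem_column_floor hr hx, rfl⟩

theorem Nsep_graphSet_le (hf : ContinuousOn f (Icc 0 1)) (hr : 0 < r) :
    (Nsep (fun u v : ℝ × ℝ => dist u v) (graphSet f) r : ℝ) ≤
      (∑ j ∈ range (⌊1 / r⌋₊ + 1), osc f (column r j)) / r + (⌊1 / r⌋₊ + 1) :=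
  Nsep_le_of_forall_card_le fun _ hs hsep => (card_le_sum_osc hf hr hs hsep).trans_eq <| by
    rw [sum_add_distrib, ← sum_div]
    simp

end Counting

section Variation

variable {f : ℝ → ℝ} {p : ℝ}

theorem ofReal_varSum_le_pVar {n : ℕ} {x : Fin (n + 1) → ℝ} (hx : IsPartition n x) :
    ENNReal.ofReal (varSum f p n x) ≤ pVar f p :=
  le_iSup₂_of_le n x (le_iSup_of_le hx le_rfl)

theorem varSum_snoc (f : ℝ → ℝ) (p : ℝ) {m : ℕ} (y : Fin (m + 1) → ℝ) (c : ℝ) :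
    varSum f p (m + 1) (Fin.snoc y c) = varSum f p m y + |f (y (Fin.last m)) - f c| ^ p := by
  simp only [varSum, Fin.sum_univ_castSucc, Fin.succ_castSucc, Fin.snoc_castSucc, Fin.succ_last,
    Fin.snoc_last]

theorem exists_isPartition_varSum_eq_add (hp : 0 < p) {m : ℕ} {y : Fin (m + 1) → ℝ}
    (hy : IsPartition m y) {c : ℝ} (hc : y (Fin.last m) ≤ c) (hc1 : c ≤ 1) :
    ∃ (m' : ℕ) (y' : Fin (m' + 1) → ℝ), IsPartition m' y' ∧ y' (Fin.last m') = c ∧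
      varSum f p m' y' = varSum f p m y + |f (y (Fin.last m)) - f c| ^ p := by
  rcases hc.eq_or_lt with h | h
  · exact ⟨m, y, hy, h, by simp [h, Real.zero_rpow hp.ne']⟩
  refine ⟨m + 1, Fin.snoc y c, ⟨?_, fun i => ?_⟩, Fin.snoc_last _ _, varSum_snoc f p y c⟩
  · simpa [Fin.insertNth_last'] using Fin.strictMono_insertNth_last hy.1 c h
  · cases i using Fin.lastCases with
    | last => simpa using ⟨(hy.2 _).1.trans h.le, hc1⟩
    | cast i => simpa using hy.2 i

theorem ofReal_sum_le_pVar (hp : 0 < p) {a b : ℕ → ℝ} (ha0 : 0 ≤ a 0) (hab : ∀ j, a j ≤ b j)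
    (hba : ∀ j, b j ≤ a (j + 1)) (hb1 : ∀ j, b j ≤ 1) (n : ℕ) :
    ENNReal.ofReal (∑ j ∈ range n, |f (a j) - f (b j)| ^ p) ≤ pVar f p := by
  suffices ∃ (m : ℕ) (y : Fin (m + 1) → ℝ), IsPartition m y ∧ y (Fin.last m) ≤ a n ∧
      ∑ j ∈ range n, |f (a j) - f (b j)| ^ p ≤ varSum f p m y by
    obtain ⟨m, y, hy, -, hsum⟩ := this
    exact (ENNReal.ofReal_le_ofReal hsum).trans (ofReal_varSum_le_pVar hy)
  induction n with
  | zero =>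
    refine ⟨0, fun _ => a 0, ⟨Fin.strictMono_iff_lt_succ.2 fun i => i.elim0, fun _ => ?_⟩,
      le_rfl, by simp [varSum]⟩
    exact ⟨ha0, (hab 0).trans (hb1 0)⟩
  | succ n ih =>
    obtain ⟨m, y, hy, hya, hsum⟩ := ih
    obtain ⟨m₁, y₁, hy₁, hy₁a, hsum₁⟩ :=
      exists_isPartition_varSum_eq_add (f := f) hp hy hya ((hab n).trans (hb1 n))
    obtain ⟨m₂, y₂, hy₂, hy₂b, hsum₂⟩ :=
      exists_isPartition_varSum_eq_add (f := f) hp hy₁ (hy₁a ▸ hab n) (hb1 n)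
    refine ⟨m₂, y₂, hy₂, hy₂b ▸ hba n, ?_⟩
    rw [sum_range_succ, hsum₂, hsum₁, hy₁a]
    have := Real.rpow_nonneg (abs_nonneg (f (y (Fin.last m)) - f (a n))) p
    linarith

theorem ofReal_sum_osc_rpow_le_pVar (hf : ContinuousOn f (Icc 0 1)) (hp : 0 < p) {r : ℝ}
    (hr : 0 < r) :
    ENNReal.ofReal (∑ j ∈ range (⌊1 / r⌋₊ + 1), osc f (column r j) ^ p) ≤ pVar f p := by
  set K := ⌊1 / r⌋₊
  -- past the last column the pairs are parked at `1`, so that they still form a chain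
  have hpair : ∀ j, ∃ a b : ℝ, a ≤ b ∧ b ≤ 1 ∧
      (j ≤ K → a ∈ column r j ∧ b ∈ column r j ∧ |f a - f b| = osc f (column r j)) ∧
      (K < j → a = 1) := by
    intro j
    by_cases hj : j ≤ K
    · obtain ⟨a, ha, b, hb, hab, habs⟩ := exists_le_abs_sub_eq_osc_column hf hr hj
      exact ⟨a, b, hab, hb.2.2, fun _ => ⟨ha, hb, habs⟩, fun h => absurd hj h.not_ge⟩
    · exact ⟨1, 1, le_rfl, le_rfl, fun h => absurd h hj, fun _ => rfl⟩
  choose a b hab hb1 hcolumn hlast using hpair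
  have hba : ∀ j, b j ≤ a (j + 1) := by
    intro j
    by_cases hj : j + 1 ≤ K
    · have h1 := (hcolumn j (by omega)).2.1.1.2
      have h2 := (hcolumn (j + 1) hj).1.1.1
      push_cast at h2
      linarith
    · exact hlast (j + 1) (by omega) ▸ hb1 j
  have hsum : ∑ j ∈ range (K + 1), osc f (column r j) ^ p
      = ∑ j ∈ range (K + 1), |f (a j) - f (b j)| ^ p :=
    sum_congr rfl fun j hj => by rw [(hcolumn j (Nat.lt_succ_iff.1 (mem_range.1 hj))).2.2]
  rw [hsum]
  exact ofReal_sum_le_pVar hp (hcolumn 0 (Nat.zero_le _)).1.2.1 hab hba hb1 _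

end Variation

section Dimension

variable {f : ℝ → ℝ}

theorem natCast_floor_one_div_add_one_le {r : ℝ} (hr0 : 0 < r) (hr1 : r ≤ 1) :
    ((⌊1 / r⌋₊ + 1 : ℕ) : ℝ) ≤ 2 / r := by
  have h1 : (⌊1 / r⌋₊ : ℝ) ≤ 1 / r := Nat.floor_le (by positivity)
  have h2 : 1 ≤ 1 / r := by rw [le_div_iff₀ hr0]; linarith
  push_cast
  linarith [show 2 / r = 1 / r + 1 / r by ring]

theorem ubdGraph_le_two (hf : ContinuousOn f (Icc 0 1)) : ubdGraph f ≤ 2 := by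
  obtain ⟨B, hB⟩ := isCompact_Icc.exists_bound_of_continuousOn hf
  have hB0 : 0 ≤ B := (norm_nonneg _).trans (hB 0 ⟨le_rfl, zero_le_one⟩)
  suffices ubdGraph f ≤ ENNReal.ofReal 2 by simpa using this
  refine ubdOf_le_of_eventually_le_mul_rpow (C := 4 * B + 2) (by positivity) ?_
  filter_upwards [Ioc_mem_nhdsGT one_pos] with r ⟨hr0, hr1⟩
  set M := ⌊1 / r⌋₊ + 1
  have hM := natCast_floor_one_div_add_one_le hr0 hr1
  have hosc : ∀ j ∈ range M, osc f (column r j) ≤ 2 * B := by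
    intro j hj
    obtain ⟨a, ha, b, hb, -, habs⟩ :=
      exists_le_abs_sub_eq_osc_column hf hr0 (Nat.lt_succ_iff.1 (mem_range.1 hj))
    have hfa : |f a| ≤ B := hB a ha.2
    have hfb : |f b| ≤ B := hB b hb.2
    rw [← habs]
    linarith [abs_sub (f a) (f b)]
  have hS : ∑ j ∈ range M, osc f (column r j) ≤ 2 / r * (2 * B) :=
    calc _ ≤ ∑ _j ∈ range M, 2 * B := sum_le_sum hosc
      _ = M * (2 * B) := by simp
      _ ≤ 2 / r * (2 * B) := by gcongr
  have h2r : 2 / r ≤ 2 / r / r := le_div_self (by positivity) hr0 hr1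
  calc _ ≤ (∑ j ∈ range M, osc f (column r j)) / r + M := by exact_mod_cast Nsep_graphSet_le hf hr0
    _ ≤ 2 / r * (2 * B) / r + 2 / r / r := by gcongr; exact hM.trans h2r
    _ = (4 * B + 2) * r ^ (-2 : ℝ) := by
      rw [Real.rpow_neg hr0.le, Real.rpow_two]
      field_simp
      ring

theorem ubdGraph_le_of_pVar_ne_top (hf : ContinuousOn f (Icc 0 1)) {p : ℝ} (hp : 1 ≤ p)
    (hV : pVar f p ≠ ⊤) : ubdGraph f ≤ ENNReal.ofReal (2 - 1 / p) := by
  have hp0 : 0 < p := by linarith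
  set V := (pVar f p).toReal
  set e := 1 - 1 / p
  have he : 0 ≤ e := by
    have : 1 / p ≤ 1 := (div_le_one hp0).2 hp
    linarith
  refine ubdOf_le_of_eventually_le_mul_rpow (C := 2 ^ e * (V ^ (1 / p) + 2)) (by positivity) ?_
  filter_upwards [Ioc_mem_nhdsGT one_pos] with r ⟨hr0, hr1⟩
  set M := ⌊1 / r⌋₊ + 1
  have hM := natCast_floor_one_div_add_one_le hr0 hr1
  have hρ : 1 ≤ (2 / r) ^ e := Real.one_le_rpow (by rw [le_div_iff₀ hr0]; linarith) he
  have hV' : ∑ j ∈ range M, osc f (column r j) ^ p ≤ V :=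
    (ENNReal.ofReal_le_iff_le_toReal hV).1 (ofReal_sum_osc_rpow_le_pVar hf hp0 hr0)
  have hS : ∑ j ∈ range M, osc f (column r j) ≤ (2 / r) ^ e * V ^ (1 / p) := by
    have hosc : ∀ j ∈ range M, 0 ≤ osc f (column r j) :=
      fun j _ => osc_nonneg (isCompact_column r j) (hf.mono inter_subset_right)
    refine (sum_le_card_rpow_mul_sum_rpow hp hosc).trans ?_
    rw [card_range]
    have hsum : 0 ≤ ∑ j ∈ range M, osc f (column r j) ^ p :=
      sum_nonneg fun j hj => Real.rpow_nonneg (hosc j hj) p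
    gcongr
  calc _ ≤ (∑ j ∈ range M, osc f (column r j)) / r + M := by exact_mod_cast Nsep_graphSet_le hf hr0
    _ ≤ (2 / r) ^ e * V ^ (1 / p) / r + (2 / r) ^ e * 2 / r := by
      gcongr
      calc (M : ℝ) ≤ 2 / r := hM
        _ ≤ (2 / r) ^ e * 2 / r := by
          rw [mul_div_assoc]
          exact le_mul_of_one_le_left (by positivity) hρ
    _ = 2 ^ e * (V ^ (1 / p) + 2) * r ^ (-(2 - 1 / p)) := by
      rw [show -(2 - 1 / p) = -e + -1 by ring, Real.rpow_add hr0, Real.rpow_neg_one,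
        Real.div_rpow zero_le_two hr0.le, Real.rpow_neg hr0.le]
      field_simp

theorem pVar_ne_top_of_varIndex_lt {p : ℝ} (h : varIndex f < ENNReal.ofReal p) : pVar f p ≠ ⊤ := by
  intro htop
  have hp : 1 ≤ p := (ENNReal.one_lt_ofReal.1 ((le_sup_left : 1 ≤ varIndex f).trans_lt h)).le
  exact h.not_ge (le_sup_of_le_right (le_iSup₂_of_le p hp (le_iSup_of_le htop le_rfl)))

end Dimension

/-- The upper box dimension of the graph of a continuous `f : [0,1] → ℝ` is at most
`2 - 1/I(f)`. -/
theorem ubdGraph_le (f : ℝ → ℝ) (hf : ContinuousOn f (Set.Icc 0 1)) :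
    ubdGraph f ≤ 2 - 1 / varIndex f := by
  rcases eq_top_or_lt_top (varIndex f) with hI | hI
  · simpa [hI] using ubdGraph_le_two hf
  set t := (varIndex f).toReal
  have ht : 1 ≤ t := by
    simpa using ENNReal.toReal_mono hI.ne (le_sup_left : 1 ≤ varIndex f)
  have hI' : 2 - 1 / varIndex f = ENNReal.ofReal (2 - 1 / t) := by
    rw [← ENNReal.ofReal_toReal hI.ne, ENNReal.ofReal_sub _ (by positivity), one_div, one_div,
      ENNReal.ofReal_inv_of_pos (by linarith), ENNReal.ofReal_ofNat]
  have hlim : Tendsto (fun p : ℝ => ENNReal.ofReal (2 - 1 / p)) (𝓝[>] t)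
      (𝓝 (2 - 1 / varIndex f)) := by
    rw [hI']
    refine (ENNReal.tendsto_ofReal (tendsto_const_nhds.sub ?_)).mono_left nhdsWithin_le_nhds
    exact tendsto_const_nhds.div tendsto_id (by linarith)
  refine ge_of_tendsto hlim (eventually_nhdsWithin_of_forall fun p (hp : t < p) => ?_)
  refine ubdGraph_le_of_pVar_ne_top hf (by linarith) (pVar_ne_top_of_varIndex_lt ?_)
  rwa [← ENNReal.ofReal_toReal hI.ne, ENNReal.ofReal_lt_ofReal_iff (by linarith)]

end
end

section
/- Let f : S^1 → ℝ be continuous and let τ : S^1 → S^1 be a homeomorphism. Then the real trees T(f) and T(f∘τ) are isometric (the change of metric produces the same tree space: π(f) = π(f∘τ)). -/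
open Set Filter Metric Topology
open scoped ENNReal NNReal

noncomputable section

lemma sInf_image_sub_const' {f : ℝ → ℝ} {S : Set ℝ} (hS : S.Nonempty) {m : ℝ}
    (hlb : ∀ z ∈ S, m ≤ f z) (c : ℝ) :
    sInf ((fun z => f z - c) '' S) = sInf (f '' S) - c := by
  have hbddR : BddBelow (f '' S) := ⟨m, by rintro w ⟨z, hz, rfl⟩; exact hlb z hz⟩
  have hbddL : BddBelow ((fun z => f z - c) '' S) :=
    ⟨m - c, by rintro w ⟨z, hz, rfl⟩; exact sub_le_sub_right (hlb z hz) c⟩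
  apply le_antisymm
  · rw [le_sub_iff_add_le]
    apply le_csInf (hS.image f)
    rintro w ⟨z, hz, rfl⟩
    have : sInf ((fun z => f z - c) '' S) ≤ f z - c := csInf_le hbddL ⟨z, hz, rfl⟩
    linarith
  · apply le_csInf (hS.image _)
    rintro w ⟨z, hz, rfl⟩
    have : sInf (f '' S) ≤ f z := csInf_le hbddR ⟨z, hz, rfl⟩
    show sInf (f '' S) - c ≤ f z - c
    linarith

/-- The real trees `T(f)` and `T(f∘τ)` are isometric for any circle homeomorphism `τ`:
there is a map `e` of `[0,1]` into `[0,1]` carrying the tree pseudometric of the excursion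
of `f∘τ` to that of the excursion of `f`, and surjective up to identification of points at
distance zero. -/
theorem tree_isometric_of_timeChange (f : ℝ → ℝ) (hf : Continuous f)
    (hper : ∀ x, f (x + 1) = f x) (τ : ℝ → ℝ) (hτ : IsCircleHomeoLift τ)
    (a : ℝ) (ha : a ∈ Set.Icc (0 : ℝ) 1) (hmin : ∀ x ∈ Set.Icc (0 : ℝ) 1, f a ≤ f x)
    (b : ℝ) (hb : b ∈ Set.Icc (0 : ℝ) 1)
    (hminb : ∀ x ∈ Set.Icc (0 : ℝ) 1, f (τ b) ≤ f (τ x)) :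
    ∃ e : ℝ → ℝ, (∀ x ∈ Set.Icc (0 : ℝ) 1, e x ∈ Set.Icc (0 : ℝ) 1) ∧
      (∀ x ∈ Set.Icc (0 : ℝ) 1, ∀ y ∈ Set.Icc (0 : ℝ) 1,
        treeDist (fun z => f (z + a) - f a) (e x) (e y) =
          treeDist (fun z => f (τ (z + b)) - f (τ b)) x y) ∧
      (∀ y ∈ Set.Icc (0 : ℝ) 1, ∃ x ∈ Set.Icc (0 : ℝ) 1,
        treeDist (fun z => f (z + a) - f a) (e x) y = 0) := by
  obtain ⟨hτc, hτbij, hτper⟩ := hτ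
  have hfP : Function.Periodic f 1 := hper
  have hfper : ∀ (x : ℝ) (n : ℤ), f (x + n) = f x := by
    intro x n
    simpa using (hfP.int_mul n) x
  have hga : ∀ t : ℝ, f a ≤ f t := by
    intro t
    have h1 : (0:ℝ) ≤ t - ⌊t⌋ := sub_nonneg.2 (Int.floor_le t)
    have h2 : t - ⌊t⌋ ≤ 1 := by have := Int.lt_floor_add_one t; linarith
    have := hmin (t - ⌊t⌋) ⟨h1, h2⟩
    rwa [show t - (⌊t⌋:ℝ) = t + ((-⌊t⌋ : ℤ):ℝ) by push_cast; ring, hfper] at this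
  have hmd := hτc.strictMono_of_inj hτbij.1
  have hτint : ∀ (x : ℝ) (n : ℤ), ∃ m : ℤ, τ (x + n) = τ x + m := by
    rcases hτper with hp | hp
    · have hq : Function.Periodic (fun x => τ x - x) 1 := by
        intro y; simp only [hp y]; ring
      intro x n
      refine ⟨n, ?_⟩
      have h := (hq.int_mul n) x
      simp only [mul_one] at h
      have h' : τ (x + n) - (x + n) = τ x - x := h
      linarith
    · have hq : Function.Periodic (fun x => τ x + x) 1 := by
        intro y; simp only [hp y]; ring
      intro x n
      refine ⟨-n, ?_⟩
      have h := (hq.int_mul n) x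
      simp only [mul_one] at h
      have h' : τ (x + n) + (x + n) = τ x + x := h
      push_cast
      linarith
  have hτba : f (τ b) = f a := by
    obtain ⟨t, ht⟩ := hτbij.2 a
    obtain ⟨m, hm⟩ := hτint t (-⌊t⌋)
    set x := Int.fract t with hxdef
    have hx01 : x ∈ Icc (0:ℝ) 1 := ⟨Int.fract_nonneg _, (Int.fract_lt_one _).le⟩
    have hxb : x = t + ((-⌊t⌋ : ℤ):ℝ) := by
      rw [hxdef, ← Int.self_sub_floor]; push_cast; ring
    have hfx : f (τ x) = f a := by rw [hxb, hm, ht, hfper]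
    exact le_antisymm (hfx ▸ hminb x hx01) (hga _)
  have hkeyc : ∃ c : ℝ, f c = f a ∧ ∀ z ∈ Icc b (b + 1), c ≤ τ z ∧ τ z ≤ c + 1 := by
    rcases hmd with hm | ha'
    · have hp1 : ∀ x, τ (x + 1) = τ x + 1 := by
        rcases hτper with hp | hp
        · exact hp
        · exfalso; have := hm (lt_add_one (0:ℝ)); rw [hp 0] at this; linarith
      refine ⟨τ b, hτba, fun z hz => ⟨hm.monotone hz.1, ?_⟩⟩
      rw [← hp1 b]; exact hm.monotone hz.2
    · have hp1 : ∀ x, τ (x + 1) = τ x - 1 := by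
        rcases hτper with hp | hp
        · exfalso; have := ha' (lt_add_one (0:ℝ)); rw [hp 0] at this; linarith
        · exact hp
      have hfc : f (τ b - 1) = f a := by
        rw [show τ b - 1 = τ b + ((-1:ℤ):ℝ) by push_cast; ring, hfper, hτba]
      refine ⟨τ b - 1, hfc, fun z hz => ⟨?_, ?_⟩⟩
      · rw [← hp1 b]; exact ha'.antitone hz.2
      · have : τ z ≤ τ b := ha'.antitone hz.1
        linarith
  have himg : ∀ s t : ℝ, τ '' uIcc s t = uIcc (τ s) (τ t) := by
    intro s t
    apply Subset.antisymm
    · rintro w ⟨z, hz, rfl⟩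
      rcases hmd with hm | ha'
      · rcases mem_uIcc.1 hz with ⟨h1, h2⟩ | ⟨h1, h2⟩
        · exact mem_uIcc.2 (Or.inl ⟨hm.monotone h1, hm.monotone h2⟩)
        · exact mem_uIcc.2 (Or.inr ⟨hm.monotone h1, hm.monotone h2⟩)
      · rcases mem_uIcc.1 hz with ⟨h1, h2⟩ | ⟨h1, h2⟩
        · exact mem_uIcc.2 (Or.inr ⟨ha'.antitone h2, ha'.antitone h1⟩)
        · exact mem_uIcc.2 (Or.inl ⟨ha'.antitone h2, ha'.antitone h1⟩)
    · exact intermediate_value_uIcc hτc.continuousOn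
  have hbdd : ∀ S : Set ℝ, BddBelow (f '' S) :=
    fun S => ⟨f a, by rintro w ⟨z, _, rfl⟩; exact hga z⟩
  have hsInf_fa : ∀ (S : Set ℝ) (c' : ℝ), c' ∈ S → f c' = f a → sInf (f '' S) = f a := by
    intro S c' hc' hfc'
    refine le_antisymm (hfc' ▸ csInf_le (hbdd S) ⟨c', hc', rfl⟩)
      (le_csInf ⟨f c', c', hc', rfl⟩ ?_)
    rintro w ⟨z, _, rfl⟩; exact hga z
  have hsInf_shift : ∀ (u v : ℝ) (k : ℤ),
      sInf (f '' uIcc (u - k) (v - k)) = sInf (f '' uIcc u v) := by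
    intro u v k
    have h1 : (fun z => z + (-(k:ℝ))) '' uIcc u v = uIcc (u - (k:ℝ)) (v - k) := by
      rw [image_add_const_uIcc, sub_eq_add_neg, sub_eq_add_neg]
    have h2 : (f ∘ fun z => z + (-(k:ℝ))) = f := by
      funext z
      show f (z + (-(k:ℝ))) = f z
      rw [show -(k:ℝ) = ((-k:ℤ):ℝ) by push_cast; ring, hfper]
    rw [← h1, ← image_comp, h2]
  have hmain : ∀ u v : ℝ, u ≤ v → ∀ c : ℝ, f c = f a → c ≤ u → v ≤ c + 1 →
      sInf (f '' uIcc (u - ⌊u - a⌋) (v - ⌊v - a⌋)) = sInf (f '' uIcc u v) := by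
    intro u v huv c hfc hcu hvc
    rcases eq_or_ne ⌊u - a⌋ ⌊v - a⌋ with hk | hk
    · rw [hk]; exact hsInf_shift u v ⌊v - a⌋
    · have hvu1 : v ≤ u + 1 := by linarith
      have hk1 : ⌊v - a⌋ = ⌊u - a⌋ + 1 := by
        have h1 : ⌊u - a⌋ ≤ ⌊v - a⌋ := Int.floor_mono (by linarith)
        have h2 : ⌊v - a⌋ ≤ ⌊u - a⌋ + 1 := by
          have h3 : ⌊v - a⌋ ≤ ⌊(u - a) + 1⌋ := Int.floor_mono (by linarith)
          simpa using h3
        omega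
      have hfl : (⌊v - a⌋ : ℝ) ≤ v - a := Int.floor_le _
      have hfl' : (⌊u - a⌋ : ℝ) ≤ u - a := Int.floor_le _
      have hlt : u - a < (⌊u - a⌋ : ℝ) + 1 := Int.lt_floor_add_one _
      have hk1' : ((⌊v - a⌋:ℤ) : ℝ) = (⌊u - a⌋ : ℝ) + 1 := by rw [hk1]; push_cast; ring
      have hRHS : sInf (f '' uIcc u v) = f a := by
        apply hsInf_fa _ (a + ⌊v - a⌋)
        · rw [uIcc_of_le huv]
          constructor
          · linarith
          · linarith
        · exact hfper a _
      have hLHS : sInf (f '' uIcc (u - ⌊u - a⌋) (v - ⌊v - a⌋)) = f a := by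
        apply hsInf_fa _ (c - ⌊u - a⌋)
        · rw [uIcc_comm, uIcc_of_le (by linarith : v - (⌊v - a⌋:ℝ) ≤ u - ⌊u - a⌋)]
          constructor
          · linarith
          · linarith
        · rw [show c - (⌊u - a⌋:ℝ) = c + ((-⌊u - a⌋ : ℤ):ℝ) by push_cast; ring, hfper, hfc]
      rw [hRHS, hLHS]
  have hkey2 : ∀ u v c : ℝ, f c = f a → c ≤ u → c ≤ v → u ≤ c + 1 → v ≤ c + 1 →
      sInf (f '' uIcc (u - ⌊u - a⌋) (v - ⌊v - a⌋)) = sInf (f '' uIcc u v) := by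
    intro u v c hfc h1 h2 h3 h4
    rcases le_total u v with h | h
    · exact hmain u v h c hfc h1 h4
    · rw [uIcc_comm, uIcc_comm u v]; exact hmain v u h c hfc h2 h3
  refine ⟨fun x => Int.fract (τ (x + b) - a), ?_, ?_, ?_⟩
  · intro x _; exact ⟨Int.fract_nonneg _, (Int.fract_lt_one _).le⟩
  · intro x hx y hy
    obtain ⟨c, hfc, hcb⟩ := hkeyc
    obtain ⟨hcu, huc⟩ := hcb (x + b) ⟨by linarith [hx.1], by linarith [hx.2]⟩
    obtain ⟨hcv, hvc⟩ := hcb (y + b) ⟨by linarith [hy.1], by linarith [hy.2]⟩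
    set u := τ (x + b) with hu
    set v := τ (y + b) with hv
    have heu : Int.fract (u - a) + a = u - ⌊u - a⌋ := by rw [← Int.self_sub_floor]; ring
    have hev : Int.fract (v - a) + a = v - ⌊v - a⌋ := by rw [← Int.self_sub_floor]; ring
    have hfu : f (u - (⌊u - a⌋:ℝ)) = f u := by
      rw [show u - (⌊u - a⌋:ℝ) = u + ((-⌊u - a⌋:ℤ):ℝ) by push_cast; ring, hfper]
    have hfv : f (v - (⌊v - a⌋:ℝ)) = f v := by
      rw [show v - (⌊v - a⌋:ℝ) = v + ((-⌊v - a⌋:ℤ):ℝ) by push_cast; ring, hfper]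
    have hRHSval : treeDist (fun z => f (τ (z + b)) - f (τ b)) x y
        = f u + f v - 2 * sInf (f '' uIcc u v) := by
      unfold treeDist
      have e1 : (fun w => f w - f (τ b)) '' (τ '' ((fun z => z + b) '' uIcc x y))
          = (fun z => f (τ (z + b)) - f (τ b)) '' uIcc x y := by
        simp only [image_image]
      rw [← e1, image_add_const_uIcc, himg, ← hu, ← hv,
        sInf_image_sub_const' nonempty_uIcc (fun z _ => hga z) (f (τ b))]
      ring
    have hLHSval : treeDist (fun z => f (z + a) - f a) (Int.fract (u - a)) (Int.fract (v - a))
        = f u + f v - 2 * sInf (f '' uIcc (u - ⌊u - a⌋) (v - ⌊v - a⌋)) := by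
      unfold treeDist
      have e1 : (fun w => f w - f a) ''
            ((fun z => z + a) '' uIcc (Int.fract (u - a)) (Int.fract (v - a)))
          = (fun z => f (z + a) - f a) '' uIcc (Int.fract (u - a)) (Int.fract (v - a)) := by
        simp only [image_image]
      rw [← e1, image_add_const_uIcc, heu, hev,
        sInf_image_sub_const' nonempty_uIcc (fun z _ => hga z) (f a)]
      show f (Int.fract (u - a) + a) - f a + (f (Int.fract (v - a) + a) - f a) - _ = _
      rw [heu, hev, hfu, hfv]
      ring
    show treeDist (fun z => f (z + a) - f a) (Int.fract (u - a)) (Int.fract (v - a))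
        = treeDist (fun z => f (τ (z + b)) - f (τ b)) x y
    rw [hRHSval, hLHSval, hkey2 u v c hfc hcu hcv huc hvc]
  · intro y hy
    obtain ⟨t, ht⟩ := hτbij.2 (y + a)
    refine ⟨Int.fract (t - b), ⟨Int.fract_nonneg _, (Int.fract_lt_one _).le⟩, ?_⟩
    obtain ⟨m, hm⟩ := hτint t (-⌊t - b⌋)
    have hxb : Int.fract (t - b) + b = t + ((-⌊t - b⌋ : ℤ):ℝ) := by
      rw [← Int.self_sub_floor]; push_cast; ring
    have hex : Int.fract (τ (Int.fract (t - b) + b) - a) = Int.fract y := by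
      rw [hxb, hm, ht, show y + a + (m:ℝ) - a = y + (m:ℝ) by ring, Int.fract_add_intCast]
    show treeDist (fun z => f (z + a) - f a) (Int.fract (τ (Int.fract (t - b) + b) - a)) y = 0
    rw [hex]
    rcases lt_or_eq_of_le hy.2 with hy1 | hy1
    · rw [Int.fract_eq_self.2 ⟨hy.1, hy1⟩]
      unfold treeDist
      rw [uIcc_self, image_singleton, csInf_singleton]
      ring
    · rw [hy1, Int.fract_one]
      unfold treeDist
      have hlb : ∀ w ∈ (fun z => f (z + a) - f a) '' uIcc (0:ℝ) 1, (0:ℝ) ≤ w := by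
        rintro w ⟨z, _, rfl⟩
        have := hga (z + a)
        show (0:ℝ) ≤ f (z + a) - f a
        linarith
      have hmem : (0:ℝ) ∈ (fun z => f (z + a) - f a) '' uIcc (0:ℝ) 1 := by
        refine ⟨0, ?_, by simp⟩
        rw [uIcc_of_le (by norm_num : (0:ℝ) ≤ 1)]
        exact ⟨le_refl _, by norm_num⟩
      have hs : sInf ((fun z => f (z + a) - f a) '' uIcc (0:ℝ) 1) = 0 :=
        le_antisymm (csInf_le ⟨0, hlb⟩ hmem) (le_csInf ⟨0, hmem⟩ hlb)
      rw [hs]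
      show f (0 + a) - f a + (f (1 + a) - f a) - 2 * 0 = 0
      rw [zero_add, add_comm 1 a, hper]
      ring


end
end

section
/- Let f be an excursion function and x ∈ [0,1]. Define γ_x : [0, f(x)] → [0,1] by γ_x(t) = max{ s ∈ [0,x] : f(s) = t } (well-defined by continuity of f and the intermediate value theorem). Then d_f(γ_x(s), γ_x(t)) = |s − t| for all s, t ∈ [0, f(x)]; in particular, the projection of γ_x into T(f) is a geodesic from the root (the class of 0) to the class of x. -/
open Set Filter Metric Topology
open scoped ENNReal NNReal

noncomputable section

/-- For an excursion function `f` and `x ∈ [0,1]`, the path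
`γ_x(t) = max {s ∈ [0,x] | f s = t}` satisfies `d_f(γ_x s, γ_x t) = |s - t|`; in
particular (since `γ_x (f x) = x` and `d_f(0, γ_x t) = t`) its projection into `T(f)` is a
geodesic from the root to the class of `x`. -/
theorem gamma_is_geodesic (f : ℝ → ℝ) (hf : ContinuousOn f (Set.Icc 0 1))
    (h0 : f 0 = 0) (h1 : f 1 = 0) (hpos : ∀ y ∈ Set.Icc (0 : ℝ) 1, 0 ≤ f y)
    (x : ℝ) (hx : x ∈ Set.Icc (0 : ℝ) 1) :
    ∀ γ : ℝ → ℝ, (γ = fun t => sSup {s | s ∈ Set.Icc 0 x ∧ f s = t}) →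
      (∀ s ∈ Set.Icc 0 (f x), ∀ t ∈ Set.Icc 0 (f x),
        treeDist f (γ s) (γ t) = |s - t|) ∧
      γ (f x) = x ∧
      (∀ t ∈ Set.Icc 0 (f x), treeDist f 0 (γ t) = t) := by
  intro γ hγ
  obtain ⟨hx0, hx1⟩ := hx
  have hfx0 : 0 ≤ f x := hpos x ⟨hx0, hx1⟩
  have hfc : ContinuousOn f (Set.Icc 0 x) := hf.mono (Set.Icc_subset_Icc le_rfl hx1)
  -- Basic properties of γ t for t ∈ [0, f x]
  have key : ∀ t ∈ Set.Icc (0:ℝ) (f x), (0 ≤ γ t ∧ γ t ≤ x) ∧ f (γ t) = t ∧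
      ∀ y, γ t ≤ y → y ≤ x → t ≤ f y := by
    intro t ht
    have hbdd : BddAbove {s | s ∈ Set.Icc 0 x ∧ f s = t} := ⟨x, fun s hs => hs.1.2⟩
    have hS : ({s | s ∈ Set.Icc 0 x ∧ f s = t}).Nonempty := by
      have ht' : t ∈ Set.Icc (f 0) (f x) := by rw [h0]; exact ht
      obtain ⟨s, hs, hfs⟩ := intermediate_value_Icc hx0 hfc ht'
      exact ⟨s, hs, hfs⟩
    have hclosed : IsClosed {s | s ∈ Set.Icc 0 x ∧ f s = t} := by
      have heq : {s | s ∈ Set.Icc 0 x ∧ f s = t} = Set.Icc 0 x ∩ f ⁻¹' {t} := by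
        ext s; simp [Set.mem_preimage]
      rw [heq]
      exact hfc.preimage_isClosed_of_isClosed isClosed_Icc isClosed_singleton
    have hmem : γ t ∈ {s | s ∈ Set.Icc 0 x ∧ f s = t} := by
      rw [hγ]; exact hclosed.csSup_mem hS hbdd
    refine ⟨⟨hmem.1.1, hmem.1.2⟩, hmem.2, ?_⟩
    intro y hy hyx
    by_contra hlt
    push_neg at hlt
    have hy0 : 0 ≤ y := le_trans hmem.1.1 hy
    have ht2 : t ∈ Set.Icc (f y) (f x) := ⟨hlt.le, ht.2⟩
    obtain ⟨s, hs, hfs⟩ := intermediate_value_Icc hyx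
      (hfc.mono (Set.Icc_subset_Icc hy0 le_rfl)) ht2
    have hsle : s ≤ γ t := by
      rw [hγ]
      exact le_csSup hbdd ⟨⟨le_trans hy0 hs.1, hs.2⟩, hfs⟩
    have hygt : γ t < y := by
      rcases lt_or_eq_of_le hy with h | h
      · exact h
      · exact absurd hmem.2 (by rw [h]; exact ne_of_lt hlt)
    exact absurd (lt_of_lt_of_le hygt hs.1) (not_lt.mpr hsle)
  -- Monotonicity of γ
  have mono : ∀ s ∈ Set.Icc (0:ℝ) (f x), ∀ t ∈ Set.Icc (0:ℝ) (f x), s ≤ t → γ s ≤ γ t := by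
    intro s hs t ht hst
    by_contra h
    push_neg at h
    obtain ⟨⟨hs0, hsx⟩, hfs, _⟩ := key s hs
    obtain ⟨_, _, hlowt⟩ := key t ht
    have h2 : t ≤ f (γ s) := hlowt (γ s) h.le hsx
    rw [hfs] at h2
    have hst' : s = t := le_antisymm hst h2
    rw [hst'] at h
    exact lt_irrefl _ h
  -- Main distance computation for s ≤ t
  have main : ∀ s ∈ Set.Icc (0:ℝ) (f x), ∀ t ∈ Set.Icc (0:ℝ) (f x), s ≤ t →
      treeDist f (γ s) (γ t) = t - s := by
    intro s hs t ht hst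
    obtain ⟨⟨hs0, hsx⟩, hfs, hlow⟩ := key s hs
    obtain ⟨⟨ht0, htx⟩, hft, _⟩ := key t ht
    have hγst : γ s ≤ γ t := mono s hs t ht hst
    have hlb : ∀ y ∈ f '' Set.Icc (γ s) (γ t), s ≤ y := by
      rintro y ⟨z, hz, rfl⟩
      exact hlow z hz.1 (le_trans hz.2 htx)
    have hinf : sInf (f '' Set.uIcc (γ s) (γ t)) = s := by
      rw [Set.uIcc_of_le hγst]
      apply le_antisymm
      · refine csInf_le ⟨s, hlb⟩ ⟨γ s, Set.left_mem_Icc.mpr hγst, hfs⟩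
      · exact le_csInf ⟨f (γ s), γ s, Set.left_mem_Icc.mpr hγst, rfl⟩ hlb
    unfold treeDist
    rw [hinf, hfs, hft]; ring
  have symm : ∀ a b, treeDist f a b = treeDist f b a := by
    intro a b; unfold treeDist; rw [Set.uIcc_comm]; ring
  refine ⟨?_, ?_, ?_⟩
  · intro s hs t ht
    rcases le_total s t with h | h
    · rw [main s hs t ht h, abs_sub_comm, abs_of_nonneg (sub_nonneg.mpr h)]
    · rw [symm, main t ht s hs h, abs_of_nonneg (sub_nonneg.mpr h)]
  · rw [hγ]
    apply le_antisymm
    · exact csSup_le ⟨x, ⟨⟨hx0, le_rfl⟩, rfl⟩⟩ (fun s hs => hs.1.2)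
    · exact le_csSup ⟨x, fun s hs => hs.1.2⟩ ⟨⟨hx0, le_rfl⟩, rfl⟩
  · intro t ht
    obtain ⟨⟨ht0, htx⟩, hft, _⟩ := key t ht
    have hlb : ∀ y ∈ f '' Set.Icc (0:ℝ) (γ t), 0 ≤ y := by
      rintro y ⟨z, hz, rfl⟩
      exact hpos z ⟨hz.1, le_trans hz.2 (le_trans htx hx1)⟩
    have hinf : sInf (f '' Set.uIcc 0 (γ t)) = 0 := by
      rw [Set.uIcc_of_le ht0]
      apply le_antisymm
      · exact csInf_le ⟨0, hlb⟩ ⟨0, Set.left_mem_Icc.mpr ht0, h0⟩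
      · exact le_csInf ⟨f 0, 0, Set.left_mem_Icc.mpr ht0, rfl⟩ hlb
    unfold treeDist
    rw [hinf, h0, hft]; ring

end
end
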